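/- arXiv:2201.10689 — 4 statements merged into one kernel-verified Lean document; each statement's English description precedes it below -/
import Mathlib

section
/- Let f₁, f₂ : ℝⁿ → (-∞, ∞] be proper convex functions with ri(dom(f₁)) ∩ ri(dom(f₂)) ≠ ∅. Then for all x̄ ∈ dom(f₁) ∩ dom(f₂), ∂(f₁ + f₂)(x̄) = ∂f₁(x̄) + ∂f₂(x̄). -/
open Set Pointwise
open Filter Topology

section Sep
variable {F : Type*} [NormedAddCommGroup F] [NormedSpace ℝ F] [FiniteDimensional ℝ F]

/-- Separation of `0` from a convex set whose affine span is everything. -/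
lemma bdSep {C : Set F} (hC : Convex ℝ C) (hne : C.Nonempty) (h0 : (0:F) ∉ C)
    (hsp : affineSpan ℝ C = ⊤) :
    ∃ φ : F →L[ℝ] ℝ, φ ≠ 0 ∧ ∀ c ∈ C, 0 ≤ φ c := by
  -- produce points outside `closure C` arbitrarily close to 0
  have hy : ∀ k : ℕ, ∃ y : F, ‖y‖ < 1/(k+1) ∧ y ∉ closure C := by
    intro k
    by_contra h
    push_neg at h
    have hball : Metric.ball (0:F) (1/(k+1)) ⊆ closure C := by
      intro y hyb
      exact h y (by simpa [dist_eq_norm] using hyb)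
    obtain ⟨x₀, hx₀⟩ := (hC.interior_nonempty_iff_affineSpan_eq_top).2 hsp
    have hx₀C : x₀ ∈ C := interior_subset hx₀
    have hx₀ne : x₀ ≠ 0 := by rintro rfl; exact h0 hx₀C
    have hx₀pos : (0:ℝ) < ‖x₀‖ := norm_pos_iff.2 hx₀ne
    have hkpos : (0:ℝ) < 1/(k+1) := by positivity
    set δ : ℝ := (1/(k+1)) / (2 * ‖x₀‖) with hδ
    have hδpos : 0 < δ := by positivity
    have hz : -δ • x₀ ∈ closure C := by
      apply hball
      have : ‖-δ • x₀‖ = δ * ‖x₀‖ := by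
        rw [norm_smul]; simp [abs_of_pos hδpos]
      rw [Metric.mem_ball, dist_zero_right, this]
      have heq : δ * ‖x₀‖ = (1/(k+1))/2 := by
        rw [hδ]; field_simp
      rw [heq]; linarith
    have h0seg : (0:F) ∈ openSegment ℝ x₀ (-δ • x₀) := by
      refine ⟨δ/(1+δ), 1/(1+δ), by positivity, by positivity, ?_, ?_⟩
      · field_simp; ring
      · rw [smul_smul]
        rw [← add_smul]
        have : δ / (1 + δ) + 1 / (1 + δ) * -δ = 0 := by field_simp; ring
        rw [this, zero_smul]
    have := hC.openSegment_interior_closure_subset_interior hx₀ hz h0seg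
    exact h0 (interior_subset this)
  choose y hylt hycl using hy
  -- separate each `y k` from `closure C`
  have hsep : ∀ k : ℕ, ∃ f : F →L[ℝ] ℝ, ‖f‖ = 1 ∧ ∀ c ∈ C, f (y k) < f c := by
    intro k
    obtain ⟨f, u, hfu, hub⟩ :=
      geometric_hahn_banach_point_closed hC.closure isClosed_closure (hycl k)
    have hfC : ∀ c ∈ C, f (y k) < f c := fun c hc =>
      hfu.trans (hub c (subset_closure hc))
    obtain ⟨c₀, hc₀⟩ := hne
    have hfne : f ≠ 0 := by
      intro h; rw [h] at hfC; simpa using hfC c₀ hc₀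
    have hfnorm : ‖f‖ ≠ 0 := by simpa using hfne
    refine ⟨‖f‖⁻¹ • f, ?_, ?_⟩
    · have hns : ‖(‖f‖⁻¹ • f : F →L[ℝ] ℝ)‖ = ‖f‖⁻¹ * ‖f‖ :=
        norm_smul_of_nonneg (by positivity) f
      rw [hns, inv_mul_cancel₀ hfnorm]
    · intro c hc
      have := hfC c hc
      simp only [ContinuousLinearMap.smul_apply, smul_eq_mul]
      exact mul_lt_mul_of_pos_left this (by positivity)
  choose g hg1 hg2 using hsep
  have hgs : ∀ k, g k ∈ Metric.sphere (0 : F →L[ℝ] ℝ) 1 := fun k =>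
    by simp [hg1 k]
  obtain ⟨φ, hφs, κ, hκ, hκt⟩ := (isCompact_sphere (0 : F →L[ℝ] ℝ) 1).tendsto_subseq hgs
  refine ⟨φ, ?_, ?_⟩
  · intro h
    rw [h] at hφs
    simp at hφs
  · intro c hc
    have hev : Tendsto (fun j => g (κ j) c) atTop (𝓝 (φ c)) :=
      ((ContinuousLinearMap.apply ℝ ℝ c).continuous.tendsto φ).comp hκt
    have hyv : Tendsto (fun j => g (κ j) (y (κ j))) atTop (𝓝 0) := by
      apply squeeze_zero_norm (a := fun j : ℕ => 1/(j+1))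
      · intro j
        have h1 : ‖g (κ j) (y (κ j))‖ ≤ ‖g (κ j)‖ * ‖y (κ j)‖ :=
          (g (κ j)).le_opNorm _
        rw [hg1] at h1
        have h2 : ‖y (κ j)‖ < 1/((κ j : ℝ)+1) := hylt _
        have h3 : 1/((κ j : ℝ)+1) ≤ 1/((j:ℝ)+1) := by
          apply one_div_le_one_div_of_le (by positivity)
          have h4 : j ≤ κ j := hκ.le_apply
          have : (j:ℝ) ≤ κ j := by exact_mod_cast h4
          linarith
        nlinarith [norm_nonneg (y (κ j))]
      · exact tendsto_one_div_add_atTop_nhds_zero_nat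
    have hsub : Tendsto (fun j => g (κ j) c - g (κ j) (y (κ j))) atTop (𝓝 (φ c - 0)) :=
      hev.sub hyv
    have : (0:ℝ) ≤ φ c - 0 :=
      ge_of_tendsto' hsub (fun j => sub_nonneg.2 (le_of_lt (hg2 (κ j) c hc)))
    linarith

lemma subset_vectorSpan_of_zero_mem_closure {C : Set F} (h : (0:F) ∈ closure C) :
    C ⊆ (vectorSpan ℝ C : Set F) := by
  intro c hc
  obtain ⟨u, hu, hul⟩ := mem_closure_iff_seq_limit.1 h
  have hmem : ∀ n, c - u n ∈ vectorSpan ℝ C := fun n => by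
    simpa [vsub_eq_sub] using vsub_mem_vectorSpan ℝ hc (hu n)
  have hlim : Tendsto (fun n => c - u n) atTop (𝓝 c) := by
    simpa using tendsto_const_nhds.sub hul
  exact (vectorSpan ℝ C).closed_of_finiteDimensional.mem_of_tendsto hlim
    (Filter.Eventually.of_forall hmem)

/-- Proper separation of a point from a convex set not containing it. -/
lemma ptSep {C : Set F} (hC : Convex ℝ C) (hne : C.Nonempty) (h0 : (0:F) ∉ C) :
    ∃ φ : F →L[ℝ] ℝ, (∀ c ∈ C, 0 ≤ φ c) ∧ (∃ c ∈ C, 0 < φ c) := by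
  by_cases hcl : (0:F) ∈ closure C
  · -- pass to the subspace spanned by C
    set V : Submodule ℝ F := vectorSpan ℝ C with hV
    have hCV : C ⊆ (V : Set F) := subset_vectorSpan_of_zero_mem_closure hcl
    have hspan : Submodule.span ℝ C = V := by
      apply le_antisymm (Submodule.span_le.2 hCV)
      rw [hV, vectorSpan_def]
      apply Submodule.span_le.2
      rintro x ⟨a, ha, b, hb, rfl⟩
      exact sub_mem (Submodule.subset_span ha) (Submodule.subset_span hb)
    set C' : Set V := ((↑) : V → F) ⁻¹' C with hC'
    have hC'conv : Convex ℝ C' := hC.linear_preimage V.subtype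
    have hC'ne : C'.Nonempty := by
      obtain ⟨c, hc⟩ := hne; exact ⟨⟨c, hCV hc⟩, hc⟩
    have h0' : (0:V) ∉ C' := h0
    have himg : (↑) '' C' = C := by
      apply Subset.antisymm (image_preimage_subset _ _)
      intro c hc; exact ⟨⟨c, hCV hc⟩, hc, rfl⟩
    have h0cl' : (0:V) ∈ closure C' := by
      obtain ⟨u, hu, hul⟩ := mem_closure_iff_seq_limit.1 hcl
      refine mem_closure_iff_seq_limit.2 ⟨fun n => ⟨u n, hCV (hu n)⟩, fun n => hu n, ?_⟩
      exact tendsto_subtype_rng.2 hul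
    have hspan' : Submodule.span ℝ C' = ⊤ := by
      apply Submodule.map_injective_of_injective V.injective_subtype
      rw [Submodule.map_span, Submodule.map_top, Submodule.range_subtype]
      show Submodule.span ℝ (((↑) : V → F) '' C') = V
      rw [himg, hspan]
    have haff' : affineSpan ℝ C' = ⊤ := by
      have hvs : vectorSpan ℝ C' = ⊤ := by
        rw [eq_top_iff, ← hspan']
        exact Submodule.span_le.2 (subset_vectorSpan_of_zero_mem_closure h0cl')
      have h0aff : (0:V) ∈ affineSpan ℝ C' := by
        have h1 : closure C' ⊆ closure (affineSpan ℝ C' : Set V) :=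
          closure_mono (subset_affineSpan ℝ C')
        have h2 : IsClosed (affineSpan ℝ C' : Set V) :=
          (affineSpan ℝ C').closed_of_finiteDimensional
        have := h1 h0cl'
        rwa [h2.closure_eq] at this
      rw [eq_top_iff]
      intro x _
      have := (AffineSubspace.vsub_right_mem_direction_iff_mem h0aff x).1
      apply this
      rw [direction_affineSpan, hvs]
      trivial
    obtain ⟨φ', hφ'ne, hφ'⟩ := bdSep hC'conv hC'ne h0' haff'
    have hstrict : ∃ c' ∈ C', 0 < φ' c' := by
      by_contra h
      push_neg at h
      have hz : ∀ c' ∈ C', φ' c' = 0 := fun c' hc' =>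
        le_antisymm (h c' hc') (hφ' c' hc')
      apply hφ'ne
      ext x
      have hx : x ∈ Submodule.span ℝ C' := by rw [hspan']; trivial
      have : Submodule.span ℝ C' ≤ LinearMap.ker (φ' : V →ₗ[ℝ] ℝ) := by
        apply Submodule.span_le.2
        intro c' hc'
        simpa using hz c' hc'
      simpa using this hx
    obtain ⟨φ, hφext, _⟩ := exists_extension_norm_eq V φ'
    refine ⟨φ, fun c hc => ?_, ?_⟩
    · have := hφ' ⟨c, hCV hc⟩ hc
      rwa [hφext ⟨c, hCV hc⟩]
    · obtain ⟨c', hc', hc'pos⟩ := hstrict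
      exact ⟨c', hc', by rw [hφext c']; exact hc'pos⟩
  · obtain ⟨f, u, hfu, hub⟩ :=
      geometric_hahn_banach_point_closed hC.closure isClosed_closure hcl
    have h0lt : (0:ℝ) < u := by simpa using hfu
    refine ⟨f, fun c hc => ?_, ?_⟩
    · exact le_of_lt (h0lt.trans (hub c (subset_closure hc)))
    · obtain ⟨c₀, hc₀⟩ := hne
      exact ⟨c₀, hc₀, h0lt.trans (hub c₀ (subset_closure hc₀))⟩

end Sep
variable {E : Type*} [NormedAddCommGroup E] [NormedSpace ℝ E]

/-- A linear functional attaining its minimum over `s` at a point of the intrinsic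
interior of `s` is constant on `s`. -/
lemma riConst {s : Set E} {x₀ : E} (h : x₀ ∈ intrinsicInterior ℝ s)
    (φ : E →L[ℝ] ℝ) (hmin : ∀ y ∈ s, φ x₀ ≤ φ y) : ∀ y ∈ s, φ y = φ x₀ := by
  rw [mem_intrinsicInterior] at h
  obtain ⟨z, hz, hzx⟩ := h
  intro y hy
  refine le_antisymm ?_ (hmin y hy)
  -- get a ball around z inside the preimage of s
  rw [mem_interior_iff_mem_nhds, Metric.mem_nhds_iff] at hz
  obtain ⟨ε, hε, hball⟩ := hz
  set t : ℝ := ε / (2 * (‖x₀ - y‖ + 1)) with ht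
  have htpos : 0 < t := by positivity
  have hmem : t • (x₀ - y) + x₀ ∈ affineSpan ℝ s := by
    have h1 : x₀ ∈ affineSpan ℝ s := by rw [← hzx]; exact z.2
    have h2 : y ∈ affineSpan ℝ s := subset_affineSpan ℝ s hy
    have := AffineSubspace.smul_vsub_vadd_mem (affineSpan ℝ s) t h1 h2 h1
    simpa [vsub_eq_sub, vadd_eq_add] using this
  set w : affineSpan ℝ s := ⟨t • (x₀ - y) + x₀, hmem⟩ with hw
  have hwball : w ∈ Metric.ball z ε := by
    rw [Metric.mem_ball, Subtype.dist_eq]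
    show dist (t • (x₀ - y) + x₀) (z : E) < ε
    rw [hzx, dist_eq_norm, add_sub_cancel_right, norm_smul]
    rw [Real.norm_eq_abs, abs_of_pos htpos, ht]
    rw [div_mul_eq_mul_div, div_lt_iff₀ (by positivity)]
    nlinarith [norm_nonneg (x₀ - y)]
  have hws : t • (x₀ - y) + x₀ ∈ s := hball hwball
  have := hmin _ hws
  have heval : φ (t • (x₀ - y) + x₀) = t * (φ x₀ - φ y) + φ x₀ := by
    simp only [map_add, map_smul, map_sub, smul_eq_mul]
    try ring
  rw [heval] at this
  nlinarith

section Main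
variable {n : ℕ}
local notation "E" => EuclideanSpace ℝ (Fin n)

set_option maxHeartbeats 2000000 in
theorem stmt_14_aux (f₁ f₂ : E → EReal)
    (hp₁ : ∃ x, f₁ x ≠ ⊤) (hp₂ : ∃ x, f₂ x ≠ ⊤)
    (hb₁ : ∀ x, f₁ x ≠ ⊥) (hb₂ : ∀ x, f₂ x ≠ ⊥)
    (hc₁ : Convex ℝ {p : E × ℝ | f₁ p.1 ≤ (p.2 : EReal)})
    (hc₂ : Convex ℝ {p : E × ℝ | f₂ p.1 ≤ (p.2 : EReal)})
    (hqc : (intrinsicInterior ℝ {x | f₁ x < ⊤} ∩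
        intrinsicInterior ℝ {x | f₂ x < ⊤}).Nonempty)
    (xbar : E) (hx₁ : f₁ xbar < ⊤) (hx₂ : f₂ xbar < ⊤) :
    {v | ∀ x, ((inner ℝ v (x - xbar) : ℝ) : EReal) ≤ (f₁ x + f₂ x) - (f₁ xbar + f₂ xbar)} =
      {v | ∀ x, ((inner ℝ v (x - xbar) : ℝ) : EReal) ≤ f₁ x - f₁ xbar} +
      {v | ∀ x, ((inner ℝ v (x - xbar) : ℝ) : EReal) ≤ f₂ x - f₂ xbar} := by
  classical
  obtain ⟨r₁, hr₁⟩ : ∃ r : ℝ, f₁ xbar = (r : EReal) :=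
    ⟨(f₁ xbar).toReal, ((f₁ xbar).coe_toReal hx₁.ne (hb₁ xbar)).symm⟩
  obtain ⟨r₂, hr₂⟩ : ∃ r : ℝ, f₂ xbar = (r : EReal) :=
    ⟨(f₂ xbar).toReal, ((f₂ xbar).coe_toReal hx₂.ne (hb₂ xbar)).symm⟩
  apply Subset.antisymm
  · -- hard direction
    intro v hv
    simp only [mem_setOf_eq] at hv
    -- the two convex sets to be separated, in E × ℝ
    set A : Set (E × ℝ) :=
      {p | f₁ p.1 < ((p.2 + r₁ + inner ℝ v (p.1 - xbar) : ℝ) : EReal)} with hA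
    set B : Set (E × ℝ) := {p | f₂ p.1 ≤ ((r₂ - p.2 : ℝ) : EReal)} with hB
    have hAconv : Convex ℝ A := by
      rintro p hp q hq θ σ hθ hσ hθσ
      rcases eq_or_lt_of_le hθ with hθ0 | hθpos
      · have hσ1 : σ = 1 := by linarith
        simpa [← hθ0, hσ1] using hq
      rcases eq_or_lt_of_le hσ with hσ0 | hσpos
      · have hθ1 : θ = 1 := by linarith
        simpa [← hσ0, hθ1] using hp
      have hp' : f₁ p.1 < ((p.2 + r₁ + inner ℝ v (p.1 - xbar) : ℝ) : EReal) := hp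
      have hq' : f₁ q.1 < ((q.2 + r₁ + inner ℝ v (q.1 - xbar) : ℝ) : EReal) := hq
      have hpt : f₁ p.1 ≠ ⊤ := (hp'.trans (EReal.coe_lt_top _)).ne
      have hqt : f₁ q.1 ≠ ⊤ := (hq'.trans (EReal.coe_lt_top _)).ne
      obtain ⟨a₁, ha₁⟩ : ∃ a : ℝ, f₁ p.1 = (a : EReal) :=
        ⟨(f₁ p.1).toReal, ((f₁ p.1).coe_toReal hpt (hb₁ _)).symm⟩
      obtain ⟨a₂, ha₂⟩ : ∃ a : ℝ, f₁ q.1 = (a : EReal) :=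
        ⟨(f₁ q.1).toReal, ((f₁ q.1).coe_toReal hqt (hb₁ _)).symm⟩
      rw [ha₁, EReal.coe_lt_coe_iff] at hp'
      rw [ha₂, EReal.coe_lt_coe_iff] at hq'
      have hmemP : (p.1, a₁) ∈ {p : E × ℝ | f₁ p.1 ≤ (p.2 : EReal)} := by
        simp only [mem_setOf_eq, ha₁, le_refl]
      have hmemQ : (q.1, a₂) ∈ {p : E × ℝ | f₁ p.1 ≤ (p.2 : EReal)} := by
        simp only [mem_setOf_eq, ha₂, le_refl]
      have hcomb := hc₁ hmemP hmemQ hθ hσ hθσ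
      simp only [Prod.smul_mk, Prod.mk_add_mk, mem_setOf_eq, smul_eq_mul] at hcomb
      show f₁ (θ • p + σ • q).1 <
        (((θ • p + σ • q).2 + r₁ + inner ℝ v ((θ • p + σ • q).1 - xbar) : ℝ) : EReal)
      have hfst : (θ • p + σ • q).1 = θ • p.1 + σ • q.1 := rfl
      have hsnd : (θ • p + σ • q).2 = θ * p.2 + σ * q.2 := rfl
      rw [hfst, hsnd]
      have hvec : θ • p.1 + σ • q.1 - xbar = θ • (p.1 - xbar) + σ • (q.1 - xbar) := by
        have h1 : θ • (p.1 - xbar) + σ • (q.1 - xbar)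
            = θ • p.1 + σ • q.1 - (θ + σ) • xbar := by
          rw [add_smul, smul_sub, smul_sub]; abel
        rw [h1, hθσ, one_smul]
      have hinner : (inner ℝ v (θ • p.1 + σ • q.1 - xbar) : ℝ) =
          θ * inner ℝ v (p.1 - xbar) + σ * inner ℝ v (q.1 - xbar) := by
        rw [hvec, inner_add_right, real_inner_smul_right, real_inner_smul_right]
      rw [hinner]
      refine lt_of_le_of_lt hcomb ?_
      rw [EReal.coe_lt_coe_iff]
      have e1 := mul_lt_mul_of_pos_left hp' hθpos
      have e2 := mul_lt_mul_of_pos_left hq' hσpos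
      have hr : θ * r₁ + σ * r₁ = r₁ := by rw [← add_mul, hθσ, one_mul]
      rw [mul_add, mul_add] at e1 e2
      linarith
    have hBconv : Convex ℝ B := by
      rintro p hp q hq θ σ hθ hσ hθσ
      have hp' : f₂ p.1 ≤ ((r₂ - p.2 : ℝ) : EReal) := hp
      have hq' : f₂ q.1 ≤ ((r₂ - q.2 : ℝ) : EReal) := hq
      have hmemP : (p.1, r₂ - p.2) ∈ {p : E × ℝ | f₂ p.1 ≤ (p.2 : EReal)} := hp'
      have hmemQ : (q.1, r₂ - q.2) ∈ {p : E × ℝ | f₂ p.1 ≤ (p.2 : EReal)} := hq'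
      have hcomb := hc₂ hmemP hmemQ hθ hσ hθσ
      simp only [Prod.smul_mk, Prod.mk_add_mk, mem_setOf_eq, smul_eq_mul] at hcomb
      show f₂ (θ • p + σ • q).1 ≤ ((r₂ - (θ • p + σ • q).2 : ℝ) : EReal)
      have hfst : (θ • p + σ • q).1 = θ • p.1 + σ • q.1 := rfl
      have hsnd : (θ • p + σ • q).2 = θ * p.2 + σ * q.2 := rfl
      rw [hfst, hsnd]
      refine le_trans hcomb ?_
      rw [EReal.coe_le_coe_iff]
      have hr : θ * r₂ + σ * r₂ = r₂ := by rw [← add_mul, hθσ, one_mul]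
      nlinarith
    have hABdisj : ∀ p : E × ℝ, p ∈ A → p ∈ B → False := by
      intro p hpA hpB
      have hpA' : f₁ p.1 < ((p.2 + r₁ + inner ℝ v (p.1 - xbar) : ℝ) : EReal) := hpA
      have hpB' : f₂ p.1 ≤ ((r₂ - p.2 : ℝ) : EReal) := hpB
      have h1t : f₁ p.1 ≠ ⊤ := (hpA'.trans (EReal.coe_lt_top _)).ne
      have h2t : f₂ p.1 ≠ ⊤ := (hpB'.trans_lt (EReal.coe_lt_top _)).ne
      obtain ⟨c₁, hc₁'⟩ : ∃ c : ℝ, f₁ p.1 = (c : EReal) :=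
        ⟨(f₁ p.1).toReal, ((f₁ p.1).coe_toReal h1t (hb₁ _)).symm⟩
      obtain ⟨c₂, hc₂'⟩ : ∃ c : ℝ, f₂ p.1 = (c : EReal) :=
        ⟨(f₂ p.1).toReal, ((f₂ p.1).coe_toReal h2t (hb₂ _)).symm⟩
      have hvp := hv p.1
      rw [hc₁', hc₂', hr₁, hr₂] at hvp
      rw [hc₁', EReal.coe_lt_coe_iff] at hpA'
      rw [hc₂', EReal.coe_le_coe_iff] at hpB'
      have hvp' : (inner ℝ v (p.1 - xbar) : ℝ) ≤ c₁ + c₂ - (r₁ + r₂) := by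
        exact_mod_cast hvp
      linarith
    -- separate
    set D : Set (E × ℝ) := A - B with hD
    have hDconv : Convex ℝ D := hAconv.sub hBconv
    have hAxbar : ∀ t : ℝ, 0 < t → (xbar, t) ∈ A := by
      intro t ht
      show f₁ xbar < ((t + r₁ + inner ℝ v (xbar - xbar) : ℝ) : EReal)
      rw [hr₁, sub_self, inner_zero_right, EReal.coe_lt_coe_iff]
      linarith
    have hBxbar : (xbar, (0:ℝ)) ∈ B := by
      show f₂ xbar ≤ ((r₂ - 0 : ℝ) : EReal)
      rw [hr₂, EReal.coe_le_coe_iff]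
      linarith
    have hDne : D.Nonempty :=
      ⟨(xbar, 1) - (xbar, 0), Set.sub_mem_sub (hAxbar 1 one_pos) hBxbar⟩
    have hD0 : (0 : E × ℝ) ∉ D := by
      rintro ⟨p, hp, q, hq, hpq⟩
      rw [sub_eq_zero] at hpq
      exact hABdisj q (hpq ▸ hp) hq
    obtain ⟨φ, hφ0, hφstrict⟩ := ptSep hDconv hDne hD0
    set ℓ : E →L[ℝ] ℝ := φ.comp (ContinuousLinearMap.inl ℝ E ℝ) with hℓ
    set α : ℝ := φ (0, 1) with hα
    have hφeq : ∀ (x : E) (t : ℝ), φ (x, t) = ℓ x + t * α := by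
      intro x t
      have hx : (x, t) = (x, (0:ℝ)) + t • ((0:E), (1:ℝ)) := by
        simp [Prod.ext_iff]
      rw [hx, map_add, map_smul]
      simp only [hℓ, ContinuousLinearMap.comp_apply, ContinuousLinearMap.inl_apply, hα,
        smul_eq_mul]
    have hsep : ∀ p ∈ A, ∀ q ∈ B, ℓ q.1 + q.2 * α ≤ ℓ p.1 + p.2 * α := by
      intro p hp q hq
      have := hφ0 (p - q) (Set.sub_mem_sub hp hq)
      rw [map_sub] at this
      have hp2 : φ p = ℓ p.1 + p.2 * α := by rw [← hφeq p.1 p.2]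
      have hq2 : φ q = ℓ q.1 + q.2 * α := by rw [← hφeq q.1 q.2]
      rw [hp2, hq2] at this
      linarith
    have hα0 : 0 ≤ α := by
      have := hsep (xbar, 1) (hAxbar 1 one_pos) (xbar, 0) hBxbar
      simp only at this
      linarith
    have hAmem : ∀ (x : E) (c : ℝ), f₁ x = (c : EReal) →
        ∀ t : ℝ, c - r₁ - inner ℝ v (x - xbar) < t → (x, t) ∈ A := by
      intro x c hc t htlt
      show f₁ x < ((t + r₁ + inner ℝ v (x - xbar) : ℝ) : EReal)
      rw [hc, EReal.coe_lt_coe_iff]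
      linarith
    have hBmem : ∀ (x : E) (c : ℝ), f₂ x = (c : EReal) → (x, r₂ - c) ∈ B := by
      intro x c hc
      show f₂ x ≤ ((r₂ - (r₂ - c) : ℝ) : EReal)
      rw [hc, EReal.coe_le_coe_iff]
      linarith
    have hαpos : 0 < α := by
      rcases hα0.lt_or_eq with h | h
      · exact h
      exfalso
      obtain ⟨x₀, hx₀1, hx₀2⟩ := hqc
      have hge : ∀ x, f₁ x ≠ ⊤ → ℓ xbar ≤ ℓ x := by
        intro x hx
        obtain ⟨c, hc⟩ : ∃ c : ℝ, f₁ x = (c : EReal) :=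
          ⟨(f₁ x).toReal, ((f₁ x).coe_toReal hx (hb₁ _)).symm⟩
        have := hsep (x, c - r₁ - inner ℝ v (x - xbar) + 1)
          (hAmem x c hc _ (by linarith)) (xbar, 0) hBxbar
        simp only at this
        rw [← h] at this
        linarith
      have hle : ∀ x, f₂ x ≠ ⊤ → ℓ x ≤ ℓ xbar := by
        intro x hx
        obtain ⟨c, hc⟩ : ∃ c : ℝ, f₂ x = (c : EReal) :=
          ⟨(f₂ x).toReal, ((f₂ x).coe_toReal hx (hb₂ _)).symm⟩
        have := hsep (xbar, 1) (hAxbar 1 one_pos) (x, r₂ - c) (hBmem x c hc)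
        simp only at this
        rw [← h] at this
        linarith
      have hx₀mem1 : x₀ ∈ {x : E | f₁ x < ⊤} := intrinsicInterior_subset hx₀1
      have hx₀mem2 : x₀ ∈ {x : E | f₂ x < ⊤} := intrinsicInterior_subset hx₀2
      have hx₀eq : ℓ x₀ = ℓ xbar :=
        le_antisymm (hle x₀ hx₀mem2.ne) (hge x₀ hx₀mem1.ne)
      have hconst1 : ∀ x ∈ {x : E | f₁ x < ⊤}, ℓ x = ℓ x₀ := by
        apply riConst hx₀1 ℓ
        intro x hx
        rw [hx₀eq]
        exact hge x hx.ne
      have hconst2 : ∀ x ∈ {x : E | f₂ x < ⊤}, ℓ x = ℓ x₀ := by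
        have := riConst hx₀2 (-ℓ) (fun x hx => by
          simp only [ContinuousLinearMap.neg_apply, neg_le_neg_iff]
          rw [hx₀eq]
          exact hle x hx.ne)
        intro x hx
        have h2 := this x hx
        simp only [ContinuousLinearMap.neg_apply, neg_inj] at h2
        exact h2
      obtain ⟨d, hd, hdpos⟩ := hφstrict
      obtain ⟨p, hp, q, hq, rfl⟩ := hd
      have hp1 : f₁ p.1 < ⊤ := hp.trans (EReal.coe_lt_top _)
      have hq1 : f₂ q.1 < ⊤ := lt_of_le_of_lt hq (EReal.coe_lt_top _)
      rw [map_sub, hφeq p.1 p.2, hφeq q.1 q.2, ← h] at hdpos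
      rw [hconst1 p.1 hp1, hconst2 q.1 hq1] at hdpos
      simp at hdpos
    -- build the decomposition
    set v₂ : E := (InnerProductSpace.toDual ℝ E).symm (α⁻¹ • (ℓ : E →L[ℝ] ℝ)) with hv₂
    have hv₂inner : ∀ z : E, (inner ℝ v₂ z : ℝ) = α⁻¹ * ℓ z := by
      intro z
      rw [hv₂, InnerProductSpace.toDual_symm_apply]
      simp
    set v₁ : E := v - v₂ with hv₁
    have hm1 : v₁ ∈ {w : E | ∀ x, ((inner ℝ w (x - xbar) : ℝ) : EReal) ≤ f₁ x - f₁ xbar} := by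
      intro x
      rw [hr₁]
      by_cases hx : f₁ x = ⊤
      · rw [hx, EReal.top_sub_coe]
        exact le_top
      obtain ⟨c, hc⟩ : ∃ c : ℝ, f₁ x = (c : EReal) :=
        ⟨(f₁ x).toReal, ((f₁ x).coe_toReal hx (hb₁ _)).symm⟩
      set t₀ : ℝ := c - r₁ - inner ℝ v (x - xbar) with ht₀
      have hkey : ℓ xbar ≤ ℓ x + t₀ * α := by
        by_contra hcon
        push_neg at hcon
        set δ : ℝ := (ℓ xbar - (ℓ x + t₀ * α)) / (2 * α) with hδ
        have hδpos : 0 < δ := by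
          apply div_pos (by linarith) (by linarith)
        have := hsep (x, t₀ + δ) (hAmem x c hc _ (by rw [ht₀]; linarith)) (xbar, 0) hBxbar
        simp only at this
        have hδα : δ * α = (ℓ xbar - (ℓ x + t₀ * α)) / 2 := by
          rw [hδ]; field_simp
        nlinarith
      rw [hc, ← EReal.coe_sub, EReal.coe_le_coe_iff]
      have hi : (inner ℝ v₁ (x - xbar) : ℝ) =
          inner ℝ v (x - xbar) - α⁻¹ * (ℓ x - ℓ xbar) := by
        rw [hv₁, inner_sub_left, hv₂inner, map_sub]
      rw [hi]
      have h2 : α⁻¹ * (ℓ xbar - ℓ x) ≤ t₀ := by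
        rw [inv_mul_le_iff₀ hαpos]
        rw [mul_comm]
        linarith
      have h3 : α⁻¹ * (ℓ x - ℓ xbar) = -(α⁻¹ * (ℓ xbar - ℓ x)) := by ring
      rw [h3]
      rw [ht₀] at h2
      linarith
    have hm2 : v₂ ∈ {w : E | ∀ x, ((inner ℝ w (x - xbar) : ℝ) : EReal) ≤ f₂ x - f₂ xbar} := by
      intro x
      rw [hr₂]
      by_cases hx : f₂ x = ⊤
      · rw [hx, EReal.top_sub_coe]
        exact le_top
      obtain ⟨c, hc⟩ : ∃ c : ℝ, f₂ x = (c : EReal) :=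
        ⟨(f₂ x).toReal, ((f₂ x).coe_toReal hx (hb₂ _)).symm⟩
      have hkey : ℓ x + (r₂ - c) * α ≤ ℓ xbar := by
        by_contra hcon
        push_neg at hcon
        set δ : ℝ := (ℓ x + (r₂ - c) * α - ℓ xbar) / (2 * α) with hδ
        have hδpos : 0 < δ := by
          apply div_pos (by linarith) (by linarith)
        have := hsep (xbar, δ) (hAxbar δ hδpos) (x, r₂ - c) (hBmem x c hc)
        simp only at this
        have hδα : δ * α = (ℓ x + (r₂ - c) * α - ℓ xbar) / 2 := by
          rw [hδ]; field_simp
        nlinarith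
      rw [hc, ← EReal.coe_sub, EReal.coe_le_coe_iff, hv₂inner, map_sub]
      have h2 : α⁻¹ * (ℓ x - ℓ xbar) ≤ c - r₂ := by
        rw [inv_mul_le_iff₀ hαpos]
        nlinarith
      linarith
    exact Set.mem_add.2 ⟨v₁, hm1, v₂, hm2, by rw [hv₁]; abel⟩
  · -- easy direction
    rintro v ⟨v₁, hv₁, v₂, hv₂, rfl⟩
    intro x
    show ((inner ℝ (v₁ + v₂) (x - xbar) : ℝ) : EReal) ≤ (f₁ x + f₂ x) - (f₁ xbar + f₂ xbar)
    have key1 := hv₁ x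
    have key2 := hv₂ x
    rw [hr₁] at key1
    rw [hr₂] at key2
    rw [hr₁, hr₂]
    by_cases h1 : f₁ x = ⊤
    · rw [h1, EReal.top_add_of_ne_bot (hb₂ x), ← EReal.coe_add, EReal.top_sub_coe]
      exact le_top
    by_cases h2 : f₂ x = ⊤
    · rw [h2, EReal.add_top_of_ne_bot (hb₁ x), ← EReal.coe_add, EReal.top_sub_coe]
      exact le_top
    obtain ⟨a₁, ha₁⟩ : ∃ a : ℝ, f₁ x = (a : EReal) :=
      ⟨(f₁ x).toReal, ((f₁ x).coe_toReal h1 (hb₁ _)).symm⟩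
    obtain ⟨a₂, ha₂⟩ : ∃ a : ℝ, f₂ x = (a : EReal) :=
      ⟨(f₂ x).toReal, ((f₂ x).coe_toReal h2 (hb₂ _)).symm⟩
    rw [ha₁] at key1
    rw [ha₂] at key2
    rw [ha₁, ha₂]
    rw [← EReal.coe_sub, EReal.coe_le_coe_iff] at key1 key2
    rw [← EReal.coe_add, ← EReal.coe_add, ← EReal.coe_sub, EReal.coe_le_coe_iff]
    rw [inner_add_left]
    linarith
end Main


/-- Subdifferential sum rule for proper convex functions under the relative
interior qualification condition. -/
theorem stmt_14 (n : ℕ) (f₁ f₂ : EuclideanSpace ℝ (Fin n) → EReal)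
    (hp₁ : ∃ x, f₁ x ≠ ⊤) (hp₂ : ∃ x, f₂ x ≠ ⊤)
    (hb₁ : ∀ x, f₁ x ≠ ⊥) (hb₂ : ∀ x, f₂ x ≠ ⊥)
    (hc₁ : Convex ℝ {p : EuclideanSpace ℝ (Fin n) × ℝ | f₁ p.1 ≤ (p.2 : EReal)})
    (hc₂ : Convex ℝ {p : EuclideanSpace ℝ (Fin n) × ℝ | f₂ p.1 ≤ (p.2 : EReal)})
    (hqc : (intrinsicInterior ℝ {x | f₁ x < ⊤} ∩
        intrinsicInterior ℝ {x | f₂ x < ⊤}).Nonempty)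
    (xbar : EuclideanSpace ℝ (Fin n)) (hx₁ : f₁ xbar < ⊤) (hx₂ : f₂ xbar < ⊤) :
    {v | ∀ x, ((inner ℝ v (x - xbar) : ℝ) : EReal) ≤ (f₁ x + f₂ x) - (f₁ xbar + f₂ xbar)} =
      {v | ∀ x, ((inner ℝ v (x - xbar) : ℝ) : EReal) ≤ f₁ x - f₁ xbar} +
      {v | ∀ x, ((inner ℝ v (x - xbar) : ℝ) : EReal) ≤ f₂ x - f₂ xbar} :=
  stmt_14_aux f₁ f₂ hp₁ hp₂ hb₁ hb₂ hc₁ hc₂ hqc xbar hx₁ hx₂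
end

section
/- Let F : ℝⁿ ⇉ ℝᵐ and G : ℝᵐ ⇉ ℝ^q be convex set-valued mappings with ri(rge(F)) ∩ ri(dom(G)) ≠ ∅. Then for any (x̄, z̄) ∈ gph(G ∘ F) and w ∈ ℝ^q, D*(G ∘ F)(x̄, z̄)(w) = ⋂_{ȳ ∈ F(x̄) ∩ G⁻¹(z̄)} (D*F(x̄, ȳ) ∘ D*G(ȳ, z̄))(w). -/
open Set

noncomputable section

private lemma ri_access {E : Type*} [NormedAddCommGroup E] [NormedSpace ℝ E] {s : Set E} {y₀ : E}
    (h : y₀ ∈ intrinsicInterior ℝ s) :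
    ∃ ε > 0, ∀ a ∈ (affineSpan ℝ s).direction, ‖a‖ < ε → y₀ + a ∈ s := by
  rw [intrinsicInterior] at h
  obtain ⟨y, hy, rfl⟩ := h
  rw [mem_interior_iff_mem_nhds, mem_nhds_induced] at hy
  obtain ⟨t, ht, hsub⟩ := hy
  obtain ⟨ε, hε, hball⟩ := Metric.mem_nhds_iff.1 ht
  refine ⟨ε, hε, fun a ha hna => ?_⟩
  have hmem : (y : E) + a ∈ affineSpan ℝ s := by
    have := AffineSubspace.vadd_mem_of_mem_direction ha y.2
    simpa [vadd_eq_add, add_comm] using this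
  have : (⟨(y : E) + a, hmem⟩ : affineSpan ℝ s) ∈ Subtype.val ⁻¹' t := by
    apply mem_preimage.2
    apply hball
    simp [Metric.mem_ball, dist_eq_norm, hna]
  exact hsub this

private lemma split_small {E : Type*} [NormedAddCommGroup E] [InnerProductSpace ℝ E]
    [FiniteDimensional ℝ E]
    (UA UB : Submodule ℝ E) {εA εB : ℝ} (hεA : 0 < εA) (hεB : 0 < εB) :
    ∃ δ > 0, ∀ d ∈ UA ⊔ UB, ‖d‖ < δ →
      ∃ a ∈ UA, ∃ b ∈ UB, ‖a‖ < εA ∧ ‖b‖ < εB ∧ d = b - a := by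
  set W := UA ⊔ UB with hW
  let ψ : (UA × UB) →ₗ[ℝ] E :=
    (UB.subtype.comp (LinearMap.snd ℝ UA UB)) - (UA.subtype.comp (LinearMap.fst ℝ UA UB))
  have hψW : ∀ p : UA × UB, ψ p ∈ W := fun p => by
    refine Submodule.sub_mem _ ?_ ?_
    · exact Submodule.mem_sup_right p.2.2
    · exact Submodule.mem_sup_left p.1.2
  let φ : (UA × UB) →ₗ[ℝ] W := ψ.codRestrict W hψW
  have hsurj : Function.Surjective φ := by
    rintro ⟨d, hd⟩
    obtain ⟨a, ha, b, hb, rfl⟩ := Submodule.mem_sup.1 hd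
    refine ⟨(⟨-a, neg_mem ha⟩, ⟨b, hb⟩), ?_⟩
    apply Subtype.ext
    show b - -a = a + b
    abel
  let φc : (UA × UB) →L[ℝ] W := LinearMap.toContinuousLinearMap φ
  have hopen : IsOpenMap φc := φc.isOpenMap hsurj
  set ε₀ := min εA εB with hε₀
  have hε₀pos : 0 < ε₀ := lt_min hεA hεB
  have himg : IsOpen (φc '' Metric.ball 0 ε₀) := hopen _ Metric.isOpen_ball
  have h0 : (0 : W) ∈ φc '' Metric.ball 0 ε₀ :=
    ⟨0, Metric.mem_ball_self hε₀pos, map_zero _⟩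
  obtain ⟨δ, hδpos, hδ⟩ := Metric.isOpen_iff.1 himg 0 h0
  refine ⟨δ, hδpos, fun d hd hnd => ?_⟩
  have : (⟨d, hd⟩ : W) ∈ φc '' Metric.ball 0 ε₀ := by
    apply hδ
    simp [Metric.mem_ball, dist_eq_norm, Submodule.coe_norm, hnd]
  obtain ⟨⟨a, b⟩, hab, heq⟩ := this
  rw [Metric.mem_ball, dist_zero_right, Prod.norm_def] at hab
  have hab' : max ‖a‖ ‖b‖ < ε₀ := hab
  have heq' : (b : E) - (a : E) = d := congrArg Subtype.val heq
  refine ⟨a, a.2, b, b.2, ?_, ?_, heq'.symm⟩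
  · exact lt_of_le_of_lt (le_trans (le_max_left _ _) (le_of_eq rfl)) (lt_of_lt_of_le hab' (min_le_left _ _))
  · exact lt_of_le_of_lt (le_max_right ‖(a:UA)‖ _) (lt_of_lt_of_le hab' (min_le_right _ _))

private lemma epigraph_separation {E : Type*} [NormedAddCommGroup E] [InnerProductSpace ℝ E] [FiniteDimensional ℝ E]
    {C : Set (E × ℝ)} (hC : Convex ℝ C)
    (hup : ∀ v : E, ∀ r r' : ℝ, (v, r) ∈ C → r ≤ r' → (v, r') ∈ C)
    {δ : ℝ} (hδ : 0 < δ) (hproj : ∀ v : E, ‖v‖ < δ → ∃ r, (v, r) ∈ C)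
    (hpos : ∀ r : ℝ, ((0 : E), r) ∈ C → 0 ≤ r) :
    ∃ v : E, ∀ p ∈ C, (inner ℝ v p.1 : ℝ) ≤ p.2 := by
  classical
  -- step 1: finite family of points in ball δ spanning E
  set N := Module.finrank ℝ E with hN
  let b : Module.Basis (Fin N) ℝ E := Module.finBasis ℝ E
  let pts : Fin N → E := fun i => (δ / (2 * (‖b i‖ + 1))) • b i
  have hbpos : ∀ i, (0:ℝ) < ‖b i‖ + 1 := fun i => by positivity
  have hpts_ball : ∀ i, ‖pts i‖ < δ := fun i => by
    have : ‖pts i‖ = (δ / (2 * (‖b i‖ + 1))) * ‖b i‖ := by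
      rw [norm_smul, Real.norm_eq_abs, abs_of_pos (by positivity)]
    rw [this]
    rw [div_mul_eq_mul_div, div_lt_iff₀ (by positivity)]
    nlinarith [norm_nonneg (b i), hδ]
  have hspan : Submodule.span ℝ (range pts) = ⊤ := by
    rw [← top_le_iff, ← b.span_eq]
    apply Submodule.span_le.2
    rintro x ⟨i, rfl⟩
    have hc : (δ / (2 * (‖b i‖ + 1))) ≠ 0 := by positivity
    have : b i = (δ / (2 * (‖b i‖ + 1)))⁻¹ • pts i := by
      rw [smul_smul, inv_mul_cancel₀ hc, one_smul]
    rw [this]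
    exact Submodule.smul_mem _ _ (Submodule.subset_span ⟨i, rfl⟩)
  -- step 2: heights
  let t : Finset E := insert 0 (Finset.image pts Finset.univ)
  have ht_ball : ∀ v ∈ t, ‖v‖ < δ := by
    intro v hv
    rcases Finset.mem_insert.1 hv with rfl | hv
    · simpa using hδ
    · obtain ⟨i, _, rfl⟩ := Finset.mem_image.1 hv
      exact hpts_ball i
  let rfn : E → ℝ := fun v => if h : ∃ r, (v, r) ∈ C then h.choose else 0
  have hrfn : ∀ v, ‖v‖ < δ → (v, rfn v) ∈ C := by
    intro v hv
    have h := hproj v hv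
    simp only [rfn, dif_pos h]
    exact h.choose_spec
  have htne : t.Nonempty := ⟨0, Finset.mem_insert_self _ _⟩
  set M := t.sup' htne rfn with hM
  have htM : ∀ v ∈ t, (v, M) ∈ C := fun v hv =>
    hup v (rfn v) M (hrfn v (ht_ball v hv)) (Finset.le_sup' rfn hv)
  -- step 3: slice at height M is convex, contains hull
  have hslice : Convex ℝ {v : E | (v, M) ∈ C} := by
    let f : E →ᵃ[ℝ] E × ℝ :=
      { toFun := fun v => (v, M)
        linear := LinearMap.prod LinearMap.id 0
        map_vadd' := fun p v => by
          apply Prod.ext <;> simp }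
    exact hC.affine_preimage f
  have hhull : convexHull ℝ (t : Set E) ⊆ {v : E | (v, M) ∈ C} :=
    convexHull_min (fun v hv => htM v hv) hslice
  -- step 4: interior of the hull is nonempty
  have hconvhull : Convex ℝ (convexHull ℝ (t : Set E)) := convex_convexHull ℝ _
  have hint : (interior (convexHull ℝ (t : Set E))).Nonempty := by
    rw [hconvhull.interior_nonempty_iff_affineSpan_eq_top, affineSpan_convexHull]
    have h0t : (0 : E) ∈ (t : Set E) := by simp [t]
    apply AffineSubspace.ext_of_direction_eq
    · rw [AffineSubspace.direction_top, direction_affineSpan]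
      apply le_antisymm le_top
      rw [← hspan]
      apply Submodule.span_le.2
      rintro x ⟨i, rfl⟩
      have hpt : pts i ∈ (t : Set E) := by
        simp only [t, Finset.coe_insert, Set.mem_insert_iff]
        right; exact Finset.mem_coe.2 (Finset.mem_image.2 ⟨i, Finset.mem_univ i, rfl⟩)
      have := vsub_mem_vectorSpan ℝ hpt h0t
      simpa [vsub_eq_sub] using this
    · exact ⟨0, mem_affineSpan ℝ h0t, AffineSubspace.mem_top ℝ E 0⟩
  obtain ⟨x₀, hx₀⟩ := hint
  -- step 5: interior point of C
  have hOsub : interior (convexHull ℝ (t : Set E)) ×ˢ Ioi M ⊆ C := by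
    rintro ⟨v, r⟩ ⟨hv, hr⟩
    exact hup v M r (hhull (interior_subset hv)) (le_of_lt hr)
  have hq₀ : (x₀, M + 1) ∈ interior C := by
    apply interior_maximal hOsub (isOpen_interior.prod isOpen_Ioi)
    exact ⟨hx₀, by simp⟩
  -- step 6: separate (0,0) from interior C
  have h00 : ((0 : E), (0 : ℝ)) ∉ interior C := by
    intro h
    obtain ⟨ε, hε, hball⟩ := Metric.isOpen_iff.1 isOpen_interior _ h
    have : ((0 : E), -(ε/2)) ∈ C := by
      apply interior_subset
      apply hball
      rw [Metric.mem_ball, Prod.dist_eq, dist_self, max_eq_right dist_nonneg, Real.dist_eq,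
        sub_zero, abs_neg, abs_of_pos (half_pos hε)]
      linarith
    have := hpos _ this
    linarith
  obtain ⟨ℓ, hℓ⟩ := geometric_hahn_banach_point_open hC.interior isOpen_interior h00
  have hℓ0 : ∀ p ∈ interior C, 0 < ℓ p := by
    intro p hp
    have := hℓ p hp
    simpa [Prod.mk_zero_zero] using this
  -- step 7: ℓ ≥ 0 on C
  have hℓC : ∀ p ∈ C, 0 ≤ ℓ p := by
    intro p hp
    by_contra hneg
    push_neg at hneg
    have hq₀pos : 0 < ℓ (x₀, M + 1) := hℓ0 _ hq₀
    set a : ℝ := -ℓ p / (2 * (ℓ (x₀, M+1) - ℓ p)) with ha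
    have hden : 0 < ℓ (x₀, M+1) - ℓ p := by linarith
    have hnum : 0 < -ℓ p := by linarith
    have hapos : 0 < a := div_pos hnum (by linarith)
    have halt : a < 1 := by
      rw [ha, div_lt_one (by linarith)]
      nlinarith
    have hmem : a • (x₀, M + 1) + (1 - a) • p ∈ interior C :=
      hC.combo_interior_self_mem_interior hq₀ hp hapos (by linarith) (by ring)
    have := hℓ0 _ hmem
    rw [map_add, map_smul, map_smul] at this
    simp only [smul_eq_mul] at this
    have : a * ℓ (x₀, M+1) + (1-a) * ℓ p > 0 := this
    have hkey : a * (ℓ (x₀, M+1) - ℓ p) = -ℓ p / 2 := by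
      rw [ha]; field_simp
    nlinarith
  -- step 8: the vertical coefficient is positive
  set c : ℝ := ℓ (0, 1) with hc
  have hdecomp : ∀ (v : E) (r : ℝ), ℓ (v, r) = ℓ (v, 0) + r * c := by
    intro v r
    have : (v, r) = (v, (0:ℝ)) + r • ((0:E), (1:ℝ)) := by
      apply Prod.ext <;> simp
    rw [this, map_add, map_smul, smul_eq_mul]
  have hcnn : 0 ≤ c := by
    by_contra hcneg
    push_neg at hcneg
    have hcne : c ≠ 0 := by linarith
    set X : ℝ := ℓ (x₀, (0:ℝ)) + (M+1) * c + 1 with hX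
    set s : ℝ := X / (-c) with hs
    set smax : ℝ := max s 0 with hsmax
    have hsnn : 0 ≤ smax := le_max_right _ _
    have hmem : (x₀, (M + 1) + smax) ∈ C :=
      hup x₀ (M+1) _ (interior_subset hq₀) (by linarith)
    have hq0 : 0 ≤ ℓ (x₀, 0) + ((M+1) + smax) * c := by
      have := hℓC _ hmem
      rwa [hdecomp] at this
    have hscmul : s * c = -X := by
      have : c / (-c) = -1 := by
        rw [div_neg, div_self hcne]
      calc s * c = X * (c / (-c)) := by rw [hs]; ring
        _ = X * (-1) := by rw [this]
        _ = -X := by ring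
    have hmono : smax * c ≤ s * c :=
      mul_le_mul_of_nonpos_right (le_max_left s 0) hcneg.le
    have hexp : ((M+1) + smax) * c = (M+1) * c + smax * c := by ring
    rw [hX] at hscmul
    linarith
  have hczero : c ≠ 0 := by
    intro hc0
    -- then the functional vanishes on horizontal directions near 0, hence everywhere
    have hgzero : ∀ v : E, ‖v‖ < δ → 0 ≤ ℓ (v, (0:ℝ)) := by
      intro v hv
      obtain ⟨r, hr⟩ := hproj v hv
      have := hℓC _ hr
      rw [hdecomp, hc0, mul_zero, add_zero] at this
      exact this
    have hgzero' : ∀ v : E, ℓ (v, (0:ℝ)) = 0 := by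
      intro v
      rcases eq_or_ne v 0 with rfl | hvne
      · have : ((0:E), (0:ℝ)) = (0 : E × ℝ) := rfl
        rw [this, map_zero]
      · have hvpos : 0 < ‖v‖ := norm_pos_iff.2 hvne
        set sc : ℝ := δ / (2 * ‖v‖) with hsc
        have hscpos : 0 < sc := by positivity
        have hsmall : ‖sc • v‖ < δ := by
          rw [norm_smul, Real.norm_eq_abs, abs_of_pos hscpos, hsc]
          rw [div_mul_eq_mul_div, div_lt_iff₀ (by positivity)]
          nlinarith
        have h1 := hgzero _ hsmall
        have hsmall' : ‖sc • (-v)‖ < δ := by simpa [norm_neg] using hsmall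
        have h2 := hgzero _ hsmall'
        have e1 : (sc • v, (0:ℝ)) = sc • ((v, (0:ℝ)) : E × ℝ) := by
          apply Prod.ext <;> simp
        have e2 : (sc • (-v), (0:ℝ)) = (-sc) • ((v, (0:ℝ)) : E × ℝ) := by
          apply Prod.ext <;> simp
        rw [e1, map_smul, smul_eq_mul] at h1
        rw [e2, map_smul, smul_eq_mul] at h2
        nlinarith
    have : ℓ (x₀, M + 1) = 0 := by
      rw [hdecomp, hc0, mul_zero, add_zero, hgzero']
    have := hℓ0 _ hq₀
    linarith
  have hcpos : 0 < c := lt_of_le_of_ne hcnn (Ne.symm hczero)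
  -- step 9: produce v via Riesz
  let g : E →L[ℝ] ℝ := ℓ.comp (ContinuousLinearMap.inl ℝ E ℝ)
  refine ⟨(-c⁻¹) • (InnerProductSpace.toDual ℝ E).symm g, ?_⟩
  rintro ⟨e, r⟩ hp
  have h1 : 0 ≤ ℓ (e, 0) + r * c := by rw [← hdecomp]; exact hℓC _ hp
  have h2 : (inner ℝ ((-c⁻¹) • (InnerProductSpace.toDual ℝ E).symm g) e : ℝ)
      = (-c⁻¹) * ℓ (e, 0) := by
    rw [real_inner_smul_left]
    congr 1
    exact InnerProductSpace.toDual_symm_apply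
  rw [h2]
  show -c⁻¹ * ℓ (e, 0) ≤ r
  have h3 := mul_nonneg (inv_nonneg.2 hcpos.le) h1
  have h4 : c⁻¹ * (ℓ (e, 0) + r * c) = c⁻¹ * ℓ (e, 0) + r := by
    field_simp
  linarith




/-- Coderivative of a set-valued mapping `F` at `(x̄, ȳ)`, applied to `v`. -/
def coderiv {n m : ℕ} (F : EuclideanSpace ℝ (Fin n) → Set (EuclideanSpace ℝ (Fin m)))
    (xbar : EuclideanSpace ℝ (Fin n)) (ybar : EuclideanSpace ℝ (Fin m))
    (v : EuclideanSpace ℝ (Fin m)) : Set (EuclideanSpace ℝ (Fin n)) :=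
  {u | ∀ p : EuclideanSpace ℝ (Fin n) × EuclideanSpace ℝ (Fin m), p.2 ∈ F p.1 →
    (inner ℝ u (p.1 - xbar) : ℝ) - (inner ℝ v (p.2 - ybar) : ℝ) ≤ 0}

/-- Coderivative chain rule under the relative interior qualification
condition `ri(rge F) ∩ ri(dom G) ≠ ∅`. -/
theorem stmt_15 (n m q : ℕ)
    (F : EuclideanSpace ℝ (Fin n) → Set (EuclideanSpace ℝ (Fin m)))
    (G : EuclideanSpace ℝ (Fin m) → Set (EuclideanSpace ℝ (Fin q)))
    (hF : Convex ℝ {p : EuclideanSpace ℝ (Fin n) × EuclideanSpace ℝ (Fin m) | p.2 ∈ F p.1})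
    (hG : Convex ℝ {p : EuclideanSpace ℝ (Fin m) × EuclideanSpace ℝ (Fin q) | p.2 ∈ G p.1})
    (hqc : (intrinsicInterior ℝ (⋃ x, F x) ∩
        intrinsicInterior ℝ {y | (G y).Nonempty}).Nonempty)
    (xbar : EuclideanSpace ℝ (Fin n)) (zbar : EuclideanSpace ℝ (Fin q))
    (hxz : zbar ∈ ⋃ y ∈ F xbar, G y) (w : EuclideanSpace ℝ (Fin q)) :
    coderiv (fun x => ⋃ y ∈ F x, G y) xbar zbar w =
      ⋂ ybar ∈ F xbar ∩ {y | zbar ∈ G y},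
        ⋃ v ∈ coderiv G ybar zbar w, coderiv F xbar ybar v := by
  obtain ⟨ybar₀, hybar₀F, hybar₀G⟩ : ∃ y, y ∈ F xbar ∧ zbar ∈ G y := by
    simpa [mem_iUnion] using hxz
  apply Subset.antisymm
  · -- hard direction
    intro u hu
    simp only [mem_iInter, mem_iUnion]
    rintro ybar hybar
    rw [mem_inter_iff] at hybar
    obtain ⟨hybarF, hybarG⟩ := hybar
    obtain ⟨y₀, hy₀A, hy₀B⟩ := hqc
    obtain ⟨εA, hεA, hA⟩ := ri_access hy₀A
    obtain ⟨εB, hεB, hB⟩ := ri_access hy₀B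
    set UA := (affineSpan ℝ (⋃ x, F x)).direction with hUA
    set UB := (affineSpan ℝ {y | (G y).Nonempty}).direction with hUB
    obtain ⟨δ, hδ, hsplit⟩ := split_small UA UB hεA hεB
    set W := UA ⊔ UB with hW
    have hmemA : ∀ y, (∃ x, y ∈ F x) → y - y₀ ∈ UA := by
      rintro y ⟨x, hx⟩
      have h1 : y ∈ affineSpan ℝ (⋃ x, F x) := mem_affineSpan ℝ (mem_iUnion.2 ⟨x, hx⟩)
      have h2 : y₀ ∈ affineSpan ℝ (⋃ x, F x) :=
        mem_affineSpan ℝ (intrinsicInterior_subset hy₀A)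
      simpa [vsub_eq_sub] using AffineSubspace.vsub_mem_direction h1 h2
    have hmemB : ∀ y, (G y).Nonempty → y - y₀ ∈ UB := by
      rintro y hy
      have h1 : y ∈ affineSpan ℝ {y | (G y).Nonempty} := mem_affineSpan ℝ hy
      have h2 : y₀ ∈ affineSpan ℝ {y | (G y).Nonempty} :=
        mem_affineSpan ℝ (intrinsicInterior_subset hy₀B)
      simpa [vsub_eq_sub] using AffineSubspace.vsub_mem_direction h1 h2
    have hyW : ∀ x y y' z, y ∈ F x → z ∈ G y' → y' - y ∈ W := by
      intro x y y' z hy hz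
      have h1 := hmemA y ⟨x, hy⟩
      have h2 := hmemB y' ⟨z, hz⟩
      have heq : y' - y = (y' - y₀) - (y - y₀) := by abel
      rw [heq]
      exact Submodule.sub_mem _ (Submodule.mem_sup_right h2) (Submodule.mem_sup_left h1)
    set C : Set (EuclideanSpace ℝ (Fin m) × ℝ) :=
      {p | ∃ x y y' z, y ∈ F x ∧ z ∈ G y' ∧ p.1 - (y' - y) ∈ Wᗮ ∧
        (inner ℝ w z : ℝ) - (inner ℝ w zbar : ℝ) - (inner ℝ u x : ℝ) + (inner ℝ u xbar : ℝ) ≤ p.2}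
      with hC_def
    have hCconv : Convex ℝ C := by
      rintro p1 ⟨x1, y1, y1', z1, hy1, hz1, hperp1, hval1⟩
        p2 ⟨x2, y2, y2', z2, hy2, hz2, hperp2, hval2⟩ a bb ha hb hab
      refine ⟨a • x1 + bb • x2, a • y1 + bb • y2, a • y1' + bb • y2', a • z1 + bb • z2,
        ?_, ?_, ?_, ?_⟩
      · have h := hF (show ((x1, y1) : _ × _) ∈ _ from hy1)
          (show ((x2, y2) : _ × _) ∈ _ from hy2) ha hb hab
        simpa [Prod.smul_mk, Prod.mk_add_mk] using h
      · have h := hG (show ((y1', z1) : _ × _) ∈ _ from hz1)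
          (show ((y2', z2) : _ × _) ∈ _ from hz2) ha hb hab
        simpa [Prod.smul_mk, Prod.mk_add_mk] using h
      · have heq : (a • p1 + bb • p2).1 - ((a • y1' + bb • y2') - (a • y1 + bb • y2))
            = a • (p1.1 - (y1' - y1)) + bb • (p2.1 - (y2' - y2)) := by
          have : (a • p1 + bb • p2).1 = a • p1.1 + bb • p2.1 := rfl
          rw [this]
          module
        rw [heq]
        exact Submodule.add_mem _ (Submodule.smul_mem _ _ hperp1) (Submodule.smul_mem _ _ hperp2)
      · have e1 : (inner ℝ w (a • z1 + bb • z2) : ℝ) = a * inner ℝ w z1 + bb * inner ℝ w z2 := by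
          rw [inner_add_right, real_inner_smul_right, real_inner_smul_right]
        have e2 : (inner ℝ u (a • x1 + bb • x2) : ℝ) = a * inner ℝ u x1 + bb * inner ℝ u x2 := by
          rw [inner_add_right, real_inner_smul_right, real_inner_smul_right]
        have hp2 : (a • p1 + bb • p2).2 = a * p1.2 + bb * p2.2 := rfl
        have hbb : bb = 1 - a := by linarith
        have key : (inner ℝ w (a • z1 + bb • z2) : ℝ) - (inner ℝ w zbar : ℝ)
              - (inner ℝ u (a • x1 + bb • x2) : ℝ) + (inner ℝ u xbar : ℝ)
            = a * ((inner ℝ w z1 : ℝ) - (inner ℝ w zbar : ℝ) - (inner ℝ u x1 : ℝ) + (inner ℝ u xbar : ℝ))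
              + bb * ((inner ℝ w z2 : ℝ) - (inner ℝ w zbar : ℝ) - (inner ℝ u x2 : ℝ)
                + (inner ℝ u xbar : ℝ)) := by
          rw [e1, e2, hbb]; ring
        rw [key, hp2]
        exact add_le_add (mul_le_mul_of_nonneg_left hval1 ha) (mul_le_mul_of_nonneg_left hval2 hb)
    have hCup : ∀ (v : EuclideanSpace ℝ (Fin m)) (r r' : ℝ), (v, r) ∈ C → r ≤ r' → (v, r') ∈ C := by
      rintro v r r' ⟨x, y, y', z, h1, h2, h3, h4⟩ hrr'
      exact ⟨x, y, y', z, h1, h2, h3, le_trans h4 hrr'⟩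
    have hCpos : ∀ r : ℝ, ((0 : EuclideanSpace ℝ (Fin m)), r) ∈ C → 0 ≤ r := by
      rintro r ⟨x, y, y', z, hy, hz, hperp, hval⟩
      have hwmem : y' - y ∈ W := hyW x y y' z hy hz
      have hperp' : y' - y ∈ Wᗮ := by
        have h0 : ((0 : EuclideanSpace ℝ (Fin m)), r).1 - (y' - y) = -(y' - y) := by
          show (0 : EuclideanSpace ℝ (Fin m)) - (y' - y) = -(y' - y)
          abel
        rw [h0] at hperp
        exact (neg_mem_iff).1 hperp
      have hzero : y' - y = 0 := Submodule.disjoint_def.1 (Submodule.orthogonal_disjoint W)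
        _ hwmem hperp'
      have hyy : y' = y := by
        have := sub_eq_zero.1 hzero
        exact this
      have hcomp : z ∈ ⋃ y'' ∈ F x, G y'' := mem_iUnion₂.2 ⟨y, hy, hyy ▸ hz⟩
      have hkey := hu (x, z) hcomp
      simp only at hkey
      rw [inner_sub_right, inner_sub_right] at hkey
      linarith
    have hCproj : ∀ v : EuclideanSpace ℝ (Fin m), ‖v‖ < δ → ∃ r, (v, r) ∈ C := by
      intro v hv
      set d : EuclideanSpace ℝ (Fin m) := (W.orthogonalProjection v : EuclideanSpace ℝ (Fin m))
        with hd_def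
      have hdW : d ∈ W := SetLike.coe_mem _
      have hdn : ‖d‖ ≤ ‖v‖ := by
        have h1 := (W.orthogonalProjection).le_opNorm v
        have h2 := Submodule.orthogonalProjection_norm_le W
        have h3 : ‖d‖ = ‖W.orthogonalProjection v‖ := rfl
        nlinarith [norm_nonneg v]
      obtain ⟨a, haU, bb, hbU, hna, hnb, hd⟩ := hsplit d hdW (lt_of_le_of_lt hdn hv)
      have hyA : y₀ + a ∈ ⋃ x, F x := hA a haU hna
      obtain ⟨x, hx⟩ := mem_iUnion.1 hyA
      obtain ⟨z, hz⟩ := hB bb hbU hnb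
      refine ⟨(inner ℝ w z : ℝ) - (inner ℝ w zbar : ℝ) - (inner ℝ u x : ℝ) + (inner ℝ u xbar : ℝ),
        x, y₀ + a, y₀ + bb, z, hx, hz, ?_, le_refl _⟩
      have heq : v - ((y₀ + bb) - (y₀ + a)) = v - d := by
        rw [hd]; abel
      show v - ((y₀ + bb) - (y₀ + a)) ∈ Wᗮ
      rw [heq]
      exact Submodule.sub_starProjection_mem_orthogonal (K := W) v
    obtain ⟨v, hsep⟩ := epigraph_separation hCconv hCup hδ hCproj hCpos
    refine ⟨v, ?_, ?_⟩
    · intro p hp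
      have hmem : ((p.1 - ybar, (inner ℝ w p.2 : ℝ) - (inner ℝ w zbar : ℝ)) :
          EuclideanSpace ℝ (Fin m) × ℝ) ∈ C := by
        refine ⟨xbar, ybar, p.1, p.2, hybarF, hp, ?_, ?_⟩
        · show (p.1 - ybar) - (p.1 - ybar) ∈ Wᗮ
          rw [sub_self]
          exact Submodule.zero_mem _
        · show (inner ℝ w p.2 : ℝ) - (inner ℝ w zbar : ℝ) - (inner ℝ u xbar : ℝ)
            + (inner ℝ u xbar : ℝ) ≤ _
          simp
      have := hsep _ hmem
      simp only at this
      rw [inner_sub_right] at this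
      rw [inner_sub_right, inner_sub_right]
      linarith
    · intro p hp
      have hmem : ((ybar - p.2, -(inner ℝ u p.1 : ℝ) + (inner ℝ u xbar : ℝ)) :
          EuclideanSpace ℝ (Fin m) × ℝ) ∈ C := by
        refine ⟨p.1, p.2, ybar, zbar, hp, hybarG, ?_, ?_⟩
        · show (ybar - p.2) - (ybar - p.2) ∈ Wᗮ
          rw [sub_self]
          exact Submodule.zero_mem _
        · show (inner ℝ w zbar : ℝ) - (inner ℝ w zbar : ℝ) - (inner ℝ u p.1 : ℝ)
            + (inner ℝ u xbar : ℝ) ≤ _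
          simp
      have hs := hsep _ hmem
      simp only at hs
      rw [inner_sub_right] at hs
      rw [inner_sub_right, inner_sub_right]
      linarith
  · -- easy direction
    intro u hu p hp
    obtain ⟨y, hyF, hzG⟩ : ∃ y, y ∈ F p.1 ∧ p.2 ∈ G y := by
      simpa [mem_iUnion] using hp
    have hu' := mem_iInter.1 hu ybar₀
    have hu'' := mem_iInter.1 hu' ⟨hybar₀F, hybar₀G⟩
    simp only [mem_iUnion] at hu''
    obtain ⟨v, hvG, huF⟩ := hu''
    have h1 := huF (p.1, y) hyF
    have h2 := hvG (y, p.2) hzG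
    simp only at h1 h2
    linarith
end
end

section
/- Let F : ℝⁿ ⇉ ℝᵐ be a convex set-valued mapping and Θ ⊂ ℝᵐ a convex set with ri(rge(F)) ∩ ri(Θ) ≠ ∅. Then for any x̄ ∈ F⁻¹(Θ) and ȳ ∈ F(x̄) ∩ Θ, N(x̄; F⁻¹(Θ)) = D*F(x̄, ȳ)(N(ȳ; Θ)) := ⋃_{v ∈ N(ȳ; Θ)} D*F(x̄, ȳ)(v). -/
open Set Filter Topology Pointwise

noncomputable section

lemma intrinsic_nhds {E : Type*} [NormedAddCommGroup E] [NormedSpace ℝ E]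
    {C : Set E} {z : E} (hz : z ∈ intrinsicInterior ℝ C) :
    ∃ ε > 0, ∀ p ∈ (affineSpan ℝ C : Set E), dist p z < ε → p ∈ C := by
  obtain ⟨z', hz', rfl⟩ := hz
  have h1 : ((↑) ⁻¹' C : Set (affineSpan ℝ C)) ∈ 𝓝 z' := mem_interior_iff_mem_nhds.1 hz'
  rw [show (𝓝 z') = Filter.comap ((↑) : affineSpan ℝ C → E) (𝓝 (z' : E)) from
    nhds_subtype _ _, Filter.mem_comap] at h1
  obtain ⟨U, hU, hUC⟩ := h1
  obtain ⟨ε, hε, hball⟩ := Metric.mem_nhds_iff.1 hU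
  refine ⟨ε, hε, fun p hp hd => ?_⟩
  exact hUC (show (⟨p, hp⟩ : affineSpan ℝ C) ∈ (↑) ⁻¹' U from hball (Metric.mem_ball.2 hd))

lemma const_of_ri_max {E : Type*} [NormedAddCommGroup E] [InnerProductSpace ℝ E]
    {C : Set E} {z v : E} (hz : z ∈ intrinsicInterior ℝ C)
    (hmax : ∀ y ∈ C, (inner ℝ v y : ℝ) ≤ inner ℝ v z) :
    ∀ y ∈ C, (inner ℝ v y : ℝ) = inner ℝ v z := by
  intro y hy
  refine le_antisymm (hmax y hy) ?_
  obtain ⟨ε, hε, hball⟩ := intrinsic_nhds hz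
  have hzC : z ∈ C := intrinsicInterior_subset hz
  by_cases hzy : z = y
  · rw [hzy]
  have hnorm : (0:ℝ) < ‖z - y‖ := by
    simpa [sub_eq_zero] using hzy
  set δ : ℝ := ε / (2 * ‖z - y‖) with hδ
  have hδpos : 0 < δ := by positivity
  have hmemspan : δ • (z - y) + z ∈ (affineSpan ℝ C : Set E) := by
    have := AffineSubspace.smul_vsub_vadd_mem (affineSpan ℝ C) δ
      (mem_affineSpan ℝ hzC) (mem_affineSpan ℝ hy) (mem_affineSpan ℝ hzC)
    simpa [vsub_eq_sub] using this
  have hdist : dist (δ • (z - y) + z) z < ε := by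
    rw [dist_eq_norm]
    have : δ • (z - y) + z - z = δ • (z - y) := by abel
    rw [this, norm_smul, Real.norm_eq_abs, abs_of_pos hδpos, hδ]
    have h9 : ε / (2 * ‖z - y‖) * ‖z - y‖ = ε / 2 := by field_simp
    rw [h9]; linarith
  have hmem : δ • (z - y) + z ∈ C := hball _ hmemspan hdist
  have h2 := hmax _ hmem
  rw [inner_add_right, real_inner_smul_right, inner_sub_right] at h2
  nlinarith

lemma ri_segment {E : Type*} [NormedAddCommGroup E] [NormedSpace ℝ E] [FiniteDimensional ℝ E]
    {C : Set E} (hC : Convex ℝ C) {z w : E} (hz : z ∈ intrinsicInterior ℝ C)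
    (hw : w ∈ closure C) {l : ℝ} (hl0 : 0 < l) (hl1 : l < 1) :
    l • z + (1 - l) • w ∈ C := by
  obtain ⟨ε, hε, hball⟩ := intrinsic_nhds hz
  have hzC : z ∈ C := intrinsicInterior_subset hz
  set c : ℝ := (1 - l) / l with hc
  have hcpos : 0 < c := by
    apply div_pos <;> linarith
  obtain ⟨w', hw', hww'⟩ := Metric.mem_closure_iff.1 hw (ε / (2 * c)) (by positivity)
  have hwspan : w ∈ (affineSpan ℝ C : Set E) := by
    have hclosed : IsClosed ((affineSpan ℝ C : Set E)) :=
      (affineSpan ℝ C).closed_of_finiteDimensional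
    exact hclosed.closure_subset (closure_mono (subset_affineSpan ℝ C) hw)
  have hmemspan : c • (w - w') + z ∈ (affineSpan ℝ C : Set E) := by
    have := AffineSubspace.smul_vsub_vadd_mem (affineSpan ℝ C) c
      hwspan (mem_affineSpan ℝ hw') (mem_affineSpan ℝ hzC)
    simpa [vsub_eq_sub] using this
  have hdist : dist (c • (w - w') + z) z < ε := by
    rw [dist_eq_norm]
    have h1 : c • (w - w') + z - z = c • (w - w') := by abel
    rw [h1, norm_smul, Real.norm_eq_abs, abs_of_pos hcpos]
    have h2 : ‖w - w'‖ = dist w w' := by rw [dist_eq_norm]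
    rw [h2]
    calc c * dist w w' < c * (ε / (2 * c)) := by
          apply mul_lt_mul_of_pos_left hww' hcpos
      _ = ε / 2 := by field_simp
      _ < ε := by linarith
  have hmem : c • (w - w') + z ∈ C := hball _ hmemspan hdist
  have hfinal := hC hmem hw' (le_of_lt hl0) (by linarith : (0:ℝ) ≤ 1 - l) (by ring)
  have heq : l • (c • (w - w') + z) + (1 - l) • w' = l • z + (1 - l) • w := by
    have hlc : l * c = 1 - l := by
      rw [hc]; field_simp
    rw [smul_add, smul_smul, hlc, smul_sub]
    abel
  rwa [heq] at hfinal

lemma proper_sep {E : Type*} [NormedAddCommGroup E] [InnerProductSpace ℝ E]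
    [FiniteDimensional ℝ E] {C : Set E} (hC : Convex ℝ C) (hne : C.Nonempty)
    (h0 : (0:E) ∉ C) :
    ∃ v : E, (∀ y ∈ C, (0:ℝ) ≤ inner ℝ v y) ∧ ∃ y ∈ C, (0:ℝ) < inner ℝ v y := by
  obtain ⟨z, hz⟩ := hne.intrinsicInterior hC
  have hzC : z ∈ C := intrinsicInterior_subset hz
  set V : Submodule ℝ E := Submodule.span ℝ C with hV
  have hCV : C ⊆ (V : Set E) := Submodule.subset_span
  have hVclosed : IsClosed (V : Set E) := V.closed_of_finiteDimensional
  have hclconv : Convex ℝ (closure C) := hC.closure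
  -- the points -z/(k+1) are not in the closure of C
  have hpk : ∀ k : ℕ, -(((k:ℝ)+1)⁻¹) • z ∉ closure C := by
    intro k hk
    set t : ℝ := ((k:ℝ)+1)⁻¹ with ht
    have htpos : 0 < t := by positivity
    set l : ℝ := t / (1 + t) with hl
    have hl0 : 0 < l := by positivity
    have hl1 : l < 1 := by
      rw [hl, div_lt_one (by linarith)]; linarith
    have hseg := ri_segment hC hz hk hl0 hl1
    have h1l : (1 - l) * t = l := by
      rw [hl]; field_simp; ring
    have : l • z + (1 - l) • (-t • z) = 0 := by
      rw [smul_smul]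
      have h8 : (1 - l) * -t = -l := by rw [mul_neg, h1l]
      rw [h8, neg_smul, add_neg_cancel]
    rw [this] at hseg
    exact h0 hseg
  -- for each k, construct a separating unit vector in V
  have key : ∀ k : ℕ, ∃ v : E, v ∈ V ∧ ‖v‖ = 1 ∧
      ∀ a ∈ C, -(‖z‖/((k:ℝ)+1)) ≤ (inner ℝ v a : ℝ) := by
    intro k
    set p : E := -(((k:ℝ)+1)⁻¹) • z with hp
    obtain ⟨f, u, hfa, huf⟩ :=
      geometric_hahn_banach_closed_point hclconv isClosed_closure (hpk k)
    set g : E := -(InnerProductSpace.toDual ℝ E).symm f with hg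
    have hginner : ∀ x : E, (inner ℝ g x : ℝ) = -(f x) := by
      intro x
      rw [hg, inner_neg_left, InnerProductSpace.toDual_symm_apply]
    set w : E := (V.orthogonalProjectionOnto g : E) with hw
    have hwinner : ∀ x ∈ V, (inner ℝ w x : ℝ) = inner ℝ g x := by
      intro x hx
      have horth := Submodule.sub_starProjection_mem_orthogonal (K := V) g
      have h7 : (inner ℝ x (g - w) : ℝ) = 0 := horth x hx
      rw [inner_sub_right] at h7
      linarith [h7, real_inner_comm w x, real_inner_comm g x]
    have hpV : p ∈ V := by
      rw [hp]
      exact V.smul_mem _ (hCV hzC)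
    have hwa : ∀ a ∈ C, (inner ℝ w p : ℝ) < inner ℝ w a := by
      intro a ha
      rw [hwinner p hpV, hwinner a (hCV ha), hginner, hginner]
      have h1 := hfa a (subset_closure ha)
      linarith [huf, h1]
    have hwne : w ≠ 0 := by
      intro hweq
      have := hwa z hzC
      rw [hweq, inner_zero_left, inner_zero_left] at this
      exact lt_irrefl _ this
    refine ⟨‖w‖⁻¹ • w, V.smul_mem _ (V.orthogonalProjectionOnto g).2, ?_, ?_⟩
    · rw [norm_smul, norm_inv, norm_norm, inv_mul_cancel₀ (norm_ne_zero_iff.2 hwne)]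
    · intro a ha
      have h1 : (inner ℝ (‖w‖⁻¹ • w) p : ℝ) ≤ inner ℝ (‖w‖⁻¹ • w) a := by
        rw [real_inner_smul_left, real_inner_smul_left]
        exact mul_le_mul_of_nonneg_left (le_of_lt (hwa a ha))
          (le_of_lt (inv_pos.2 (norm_pos_iff.2 hwne)))
      refine le_trans ?_ h1
      have h2 : |(inner ℝ (‖w‖⁻¹ • w) p : ℝ)| ≤ ‖‖w‖⁻¹ • w‖ * ‖p‖ := abs_real_inner_le_norm _ _
      have h3 : ‖‖w‖⁻¹ • w‖ = 1 := by
        rw [norm_smul, norm_inv, norm_norm, inv_mul_cancel₀ (norm_ne_zero_iff.2 hwne)]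
      have h4 : ‖p‖ = ‖z‖/((k:ℝ)+1) := by
        rw [hp, norm_smul, norm_neg, norm_inv, Real.norm_eq_abs,
          abs_of_pos (by positivity : (0:ℝ) < (k:ℝ)+1)]
        rw [inv_mul_eq_div]
      rw [h3, one_mul, h4] at h2
      linarith [neg_abs_le (inner ℝ (‖w‖⁻¹ • w) p : ℝ), h2]
  choose useq huV hunorm hulb using key
  have husphere : ∀ k, useq k ∈ Metric.sphere (0:E) 1 := by
    intro k; rw [Metric.mem_sphere, dist_zero_right]; exact hunorm k
  obtain ⟨v, hvsph, φ, hφmono, hφtendsto⟩ :=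
    (isCompact_sphere (0:E) 1).tendsto_subseq husphere
  have hvV : v ∈ V := hVclosed.mem_of_tendsto hφtendsto (Filter.Eventually.of_forall
    (fun j => huV (φ j)))
  have hvnorm : ‖v‖ = 1 := by
    rw [Metric.mem_sphere, dist_zero_right] at hvsph; exact hvsph
  have hmain : ∀ a ∈ C, (0:ℝ) ≤ inner ℝ v a := by
    intro a ha
    have hlim1 : Filter.Tendsto (fun j => (inner ℝ (useq (φ j)) a : ℝ)) Filter.atTop
        (𝓝 (inner ℝ v a : ℝ)) :=
      (hφtendsto.inner tendsto_const_nhds)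
    have hlim2 : Filter.Tendsto (fun j => -(‖z‖/((φ j : ℝ)+1))) Filter.atTop (𝓝 0) := by
      have h5 : Filter.Tendsto (fun j => ((φ j : ℝ)+1)) Filter.atTop Filter.atTop := by
        apply Filter.tendsto_atTop_add_const_right
        exact Filter.Tendsto.comp tendsto_natCast_atTop_atTop hφmono.tendsto_atTop
      have h6 := Filter.Tendsto.div_atTop (tendsto_const_nhds (x := ‖z‖)) h5
      simpa using h6.neg
    exact le_of_tendsto_of_tendsto' hlim2 hlim1 (fun j => hulb (φ j) a ha)
  refine ⟨v, hmain, ?_⟩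
  by_contra hcon
  push_neg at hcon
  have hzero : ∀ a ∈ C, (inner ℝ v a : ℝ) = 0 := fun a ha =>
    le_antisymm (hcon a ha) (hmain a ha)
  have hker : V ≤ LinearMap.ker (innerSL ℝ v).toLinearMap := by
    rw [hV]
    apply Submodule.span_le.2
    intro a ha
    simp only [SetLike.mem_coe, LinearMap.mem_ker, ContinuousLinearMap.coe_coe, innerSL_apply_apply]
    exact hzero a ha
  have := hker hvV
  simp only [LinearMap.mem_ker, ContinuousLinearMap.coe_coe, innerSL_apply_apply] at this
  rw [real_inner_self_eq_norm_sq, hvnorm] at this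
  norm_num at this

/-- Representation of the normal cone to the preimage `F⁻¹(Θ)` via the
coderivative of `F` under the qualification `ri(rge F) ∩ ri(Θ) ≠ ∅`. -/
theorem stmt_16 (n m : ℕ)
    (F : EuclideanSpace ℝ (Fin n) → Set (EuclideanSpace ℝ (Fin m)))
    (hF : Convex ℝ {p : EuclideanSpace ℝ (Fin n) × EuclideanSpace ℝ (Fin m) | p.2 ∈ F p.1})
    (Θ : Set (EuclideanSpace ℝ (Fin m))) (hΘ : Convex ℝ Θ)
    (hqc : (intrinsicInterior ℝ (⋃ x, F x) ∩ intrinsicInterior ℝ Θ).Nonempty)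
    (xbar : EuclideanSpace ℝ (Fin n)) (ybar : EuclideanSpace ℝ (Fin m))
    (hy : ybar ∈ F xbar ∩ Θ) :
    {u | ∀ x ∈ {x' | (F x' ∩ Θ).Nonempty}, (inner ℝ u (x - xbar) : ℝ) ≤ 0} =
      ⋃ v ∈ {v' | ∀ y ∈ Θ, (inner ℝ v' (y - ybar) : ℝ) ≤ 0},
        coderiv F xbar ybar v := by
  obtain ⟨hyF, hyΘ⟩ := hy
  ext u
  simp only [Set.mem_setOf_eq, Set.mem_iUnion]
  constructor
  · -- hard direction
    intro hu
    classical
    set C1 : Set (EuclideanSpace ℝ (Fin m) × ℝ) :=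
      {q | ∃ x, q.1 ∈ F x ∧ q.2 ≤ (inner ℝ u (x - xbar) : ℝ)} with hC1def
    set C2 : Set (EuclideanSpace ℝ (Fin m) × ℝ) := Θ ×ˢ Set.Ioi (0:ℝ) with hC2def
    have hC1conv : Convex ℝ C1 := by
      rintro q1 ⟨x1, hx1, hs1⟩ q2 ⟨x2, hx2, hs2⟩ a b ha hb hab
      refine ⟨a • x1 + b • x2, ?_, ?_⟩
      · have hg := hF (show ((x1, q1.1) : _ × _) ∈ {p | p.2 ∈ F p.1} from hx1)
          (show ((x2, q2.1) : _ × _) ∈ {p | p.2 ∈ F p.1} from hx2) ha hb hab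
        simpa using hg
      · have e1 : (inner ℝ u (a • x1 + b • x2 - xbar) : ℝ)
            = a * (inner ℝ u (x1 - xbar) : ℝ) + b * (inner ℝ u (x2 - xbar) : ℝ) := by
          simp only [inner_sub_right, inner_add_right, real_inner_smul_right]
          linear_combination (inner ℝ u xbar : ℝ) * hab
        have e2 : (a • q1 + b • q2).2 = a * q1.2 + b * q2.2 := rfl
        rw [e2, e1]
        have := add_le_add (mul_le_mul_of_nonneg_left hs1 ha)
          (mul_le_mul_of_nonneg_left hs2 hb)
        exact this
    have hC2conv : Convex ℝ C2 := hΘ.prod (convex_Ioi 0)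
    have hD'conv : Convex ℝ (C2 - C1) := hC2conv.sub hC1conv
    have hmemC2 : ((ybar, (1:ℝ)) : _ × _) ∈ C2 := ⟨hyΘ, by norm_num⟩
    have hmemC1 : ((ybar, (0:ℝ)) : _ × _) ∈ C1 := by
      refine ⟨xbar, hyF, ?_⟩
      simp
    have hD'ne : (C2 - C1).Nonempty := ⟨_, Set.sub_mem_sub hmemC2 hmemC1⟩
    have h0D' : (0 : EuclideanSpace ℝ (Fin m) × ℝ) ∉ C2 - C1 := by
      rw [Set.mem_sub]
      rintro ⟨q2, hq2, q1, hq1, hdiff⟩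
      have hq21 : q2 = q1 := by rwa [sub_eq_zero] at hdiff
      obtain ⟨x, hxF, hxs⟩ := hq1
      have h1 := hu x ⟨q1.1, hxF, by rw [← hq21]; exact hq2.1⟩
      have h2 : (0:ℝ) < q2.2 := hq2.2
      rw [hq21] at h2
      linarith
    -- move to the L2 product space
    set L := (WithLp.linearEquiv 2 ℝ (EuclideanSpace ℝ (Fin m) × ℝ)).symm with hLdef
    set D : Set (WithLp 2 (EuclideanSpace ℝ (Fin m) × ℝ)) := L '' (C2 - C1) with hDdef
    have hDconv : Convex ℝ D := hD'conv.linear_image L.toLinearMap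
    have hDne : D.Nonempty := hD'ne.image L
    have h0D : (0 : WithLp 2 (EuclideanSpace ℝ (Fin m) × ℝ)) ∉ D := by
      rintro ⟨d, hd, hL0⟩
      have : d = 0 := by
        have := congrArg (WithLp.linearEquiv 2 ℝ (EuclideanSpace ℝ (Fin m) × ℝ)) hL0
        simpa using this
      rw [this] at hd
      exact h0D' hd
    obtain ⟨w, hw1, hw2⟩ := proper_sep hDconv hDne h0D
    set v1 : EuclideanSpace ℝ (Fin m) := w.fst with hv1def
    set β : ℝ := w.snd with hβdef
    have hinner : ∀ q : EuclideanSpace ℝ (Fin m) × ℝ,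
        (inner ℝ w (L q) : ℝ) = (inner ℝ v1 q.1 : ℝ) + β * q.2 := by
      intro q
      rw [WithLp.prod_inner_apply]
      congr 1
      rw [RCLike.inner_apply', conj_trivial]
      rfl
    have h1' : ∀ yθ ∈ Θ, ∀ t : ℝ, 0 < t → ∀ x : EuclideanSpace ℝ (Fin n),
        ∀ yf ∈ F x, ∀ s : ℝ, s ≤ (inner ℝ u (x - xbar) : ℝ) →
        0 ≤ (inner ℝ v1 (yθ - yf) : ℝ) + β * (t - s) := by
      intro yθ hyθ t ht x yf hyf s hs
      have hmem : L (((yθ, t) : _ × _) - (yf, s)) ∈ D :=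
        Set.mem_image_of_mem _ (Set.sub_mem_sub ⟨hyθ, ht⟩ ⟨x, hyf, hs⟩)
      have := hw1 _ hmem
      rwa [hinner] at this
    have hβ0 : 0 ≤ β := by
      have := h1' ybar hyΘ 1 one_pos xbar ybar hyF 0 (by simp)
      simpa using this
    have hΘineq : ∀ y ∈ Θ, 0 ≤ (inner ℝ v1 (y - ybar) : ℝ) := by
      intro y hyy
      by_contra hcon
      push_neg at hcon
      set c : ℝ := (inner ℝ v1 (y - ybar) : ℝ) with hcdef
      have ht : (0:ℝ) < -c / (2 * (β + 1)) := by
        apply div_pos (by linarith) (by linarith)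
      have := h1' y hyy (-c / (2 * (β + 1))) ht xbar ybar hyF 0 (by simp)
      rw [sub_zero] at this
      have hβc : β * (-c / (2 * (β + 1))) ≤ -c / 2 := by
        rw [← mul_div_assoc, div_le_div_iff₀ (by linarith) (by norm_num : (0:ℝ) < 2)]
        nlinarith
      linarith
    have hFineq : ∀ x : EuclideanSpace ℝ (Fin n), ∀ yf ∈ F x,
        β * (inner ℝ u (x - xbar) : ℝ) ≤ (inner ℝ v1 (ybar - yf) : ℝ) := by
      intro x yf hyf
      by_contra hcon
      push_neg at hcon
      set c : ℝ := (inner ℝ v1 (ybar - yf) : ℝ) - β * (inner ℝ u (x - xbar) : ℝ) with hcdef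
      have hcneg : c < 0 := by rw [hcdef]; linarith
      have ht : (0:ℝ) < -c / (2 * (β + 1)) := by
        apply div_pos (by linarith) (by linarith)
      have := h1' ybar hyΘ (-c / (2 * (β + 1))) ht x yf hyf
        ((inner ℝ u (x - xbar) : ℝ)) le_rfl
      have hβc : β * (-c / (2 * (β + 1))) ≤ -c / 2 := by
        rw [← mul_div_assoc, div_le_div_iff₀ (by linarith) (by norm_num : (0:ℝ) < 2)]
        nlinarith
      have hexp : β * (-c / (2 * (β + 1)) - (inner ℝ u (x - xbar) : ℝ))
          = β * (-c / (2 * (β + 1))) - β * (inner ℝ u (x - xbar) : ℝ) := by ring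
      rw [hexp] at this
      linarith
    rcases eq_or_lt_of_le hβ0 with hβeq | hβpos
    · -- degenerate case: contradiction with properness
      exfalso
      obtain ⟨z, hzF, hzΘ⟩ := hqc
      have hzΘ' : z ∈ Θ := intrinsicInterior_subset hzΘ
      have hzF' : z ∈ ⋃ x, F x := intrinsicInterior_subset hzF
      have hsep : ∀ yθ ∈ Θ, ∀ yf ∈ ⋃ x, F x, (inner ℝ v1 yf : ℝ) ≤ inner ℝ v1 yθ := by
        intro yθ hyθ yf hyf
        obtain ⟨x, hx⟩ := Set.mem_iUnion.1 hyf
        have := h1' yθ hyθ 1 one_pos x yf hx ((inner ℝ u (x - xbar) : ℝ)) le_rfl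
        rw [← hβeq] at this
        rw [inner_sub_right] at this
        linarith
      have hconstF : ∀ yf ∈ ⋃ x, F x, (inner ℝ v1 yf : ℝ) = inner ℝ v1 z :=
        const_of_ri_max hzF (fun yf hyf => hsep z hzΘ' yf hyf)
      have hconstΘ : ∀ yθ ∈ Θ, (inner ℝ (-v1) yθ : ℝ) = inner ℝ (-v1) z := by
        apply const_of_ri_max hzΘ
        intro yθ hyθ
        rw [inner_neg_left, inner_neg_left, neg_le_neg_iff]
        exact hsep yθ hyθ z hzF'
      obtain ⟨d0, hd0, hpos⟩ := hw2
      obtain ⟨q, hq, rfl⟩ := hd0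
      rw [Set.mem_sub] at hq
      obtain ⟨q2, hq2, q1, hq1, rfl⟩ := hq
      obtain ⟨x1, hx1F, _⟩ := hq1
      have hq1U : q1.1 ∈ ⋃ x, F x := Set.mem_iUnion.2 ⟨x1, hx1F⟩
      have hval := hinner (q2 - q1)
      rw [← hβeq] at hval
      have e3 : ((q2 - q1).1 : EuclideanSpace ℝ (Fin m)) = q2.1 - q1.1 := rfl
      rw [e3, inner_sub_right] at hval
      have e4 : (inner ℝ v1 q2.1 : ℝ) = inner ℝ v1 z := by
        have := hconstΘ q2.1 hq2.1
        rw [inner_neg_left, inner_neg_left] at this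
        linarith
      have e5 : (inner ℝ v1 q1.1 : ℝ) = inner ℝ v1 z := hconstF q1.1 hq1U
      rw [e4, e5] at hval
      rw [sub_self, zero_mul, add_zero] at hval
      rw [hval] at hpos
      exact lt_irrefl _ hpos
    · -- main case : β > 0
      set v : EuclideanSpace ℝ (Fin m) := -(β⁻¹ • v1) with hvdef
      refine ⟨v, ?_, ?_⟩
      · intro y hyy
        rw [hvdef, inner_neg_left, real_inner_smul_left]
        have := hΘineq y hyy
        have hβinv : (0:ℝ) ≤ β⁻¹ := le_of_lt (inv_pos.2 hβpos)
        nlinarith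
      · intro p hp
        have h1 := hFineq p.1 p.2 hp
        rw [hvdef, inner_neg_left, real_inner_smul_left]
        have hβinv : (0:ℝ) < β⁻¹ := inv_pos.2 hβpos
        have h2 : β⁻¹ * (β * (inner ℝ u (p.1 - xbar) : ℝ))
            ≤ β⁻¹ * (inner ℝ v1 (ybar - p.2) : ℝ) :=
          mul_le_mul_of_nonneg_left h1 (le_of_lt hβinv)
        rw [← mul_assoc, inv_mul_cancel₀ (ne_of_gt hβpos), one_mul] at h2
        have e6 : (inner ℝ v1 (ybar - p.2) : ℝ) = -(inner ℝ v1 (p.2 - ybar) : ℝ) := by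
          rw [← inner_neg_right]
          congr 1
          abel
        rw [e6] at h2
        nlinarith
  · -- easy direction
    rintro ⟨v, hv, hcode⟩
    intro x hx
    obtain ⟨y, hyFx, hyΘx⟩ := hx
    have h1 := hcode (x, y) hyFx
    have h2 := hv y hyΘx
    simp only at h1
    linarith
end
end

section
/- Let f : ℝⁿ → (-∞, ∞] be a proper convex function, λ ∈ ℝ, and L_λ = {x : f(x) ≤ λ}. Assume f(x̄) = λ and there exists x̂ ∈ ri(dom(f)) with f(x̂) < λ. Then N(x̄; L_λ) = (⋃_{α > 0} α·∂f(x̄)) ∪ ∂^∞ f(x̄). -/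
open Set Pointwise

noncomputable section

/-- Representation of the normal cone to a sublevel set `L_λ = {x | f x ≤ λ}`. -/
theorem stmt_17 (n : ℕ) (f : EuclideanSpace ℝ (Fin n) → EReal)
    (hproper : ∃ x, f x ≠ ⊤) (hbot : ∀ x, f x ≠ ⊥)
    (hconv : Convex ℝ {p : EuclideanSpace ℝ (Fin n) × ℝ | f p.1 ≤ (p.2 : EReal)})
    (lam : ℝ) (xbar : EuclideanSpace ℝ (Fin n)) (hxbar : f xbar = (lam : EReal))
    (hhat : ∃ xhat ∈ intrinsicInterior ℝ {x | f x < ⊤}, f xhat < (lam : EReal)) :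
    {v | ∀ x, f x ≤ (lam : EReal) → (inner ℝ v (x - xbar) : ℝ) ≤ 0} =
      (⋃ α ∈ Ioi (0 : ℝ),
        α • {v | ∀ x, ((inner ℝ v (x - xbar) : ℝ) : EReal) ≤ f x - f xbar}) ∪
      {v | ∀ q : EuclideanSpace ℝ (Fin n) × ℝ, f q.1 ≤ (q.2 : EReal) →
        (inner ℝ v (q.1 - xbar) : ℝ) + 0 * (q.2 - (f xbar).toReal) ≤ 0} := by
  have hr : ∀ x, f x ≠ ⊤ → f x = (((f x).toReal : ℝ) : EReal) :=
    fun x hx => (EReal.coe_toReal hx (hbot x)).symm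
  ext v
  simp only [mem_setOf_eq, mem_union, mem_iUnion]
  constructor
  · -- hard direction
    intro hv
    set r : EuclideanSpace ℝ (Fin n) → ℝ := fun x => (f x).toReal with hrdef
    set ip : EuclideanSpace ℝ (Fin n) → ℝ := fun x => (inner ℝ v (x - xbar) : ℝ) with hipdef
    by_cases hs : ∀ x, f x ≠ ⊤ → ip x ≤ 0
    · -- singular case
      right
      intro q hq
      have hq1 : f q.1 ≠ ⊤ := by
        intro h; rw [h] at hq; simp at hq
      have := hs q.1 hq1
      simpa using this
    · -- positive multiple of subdifferential
      left
      push_neg at hs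
      obtain ⟨x₀, hx₀top, hx₀pos⟩ := hs
      obtain ⟨xh, -, hxh⟩ := hhat
      have hxhtop : f xh ≠ ⊤ := fun h => by simp [h] at hxh
      have hxhlt : r xh < lam := by
        rw [hrdef]
        have := hxh; rw [hr xh hxhtop] at this
        exact EReal.coe_lt_coe_iff.mp this
      -- key cross inequality
      have key : ∀ x₁ x₂, f x₁ ≠ ⊤ → lam < r x₁ → f x₂ ≠ ⊤ → r x₂ < lam →
          (lam - r x₂) * ip x₁ + (r x₁ - lam) * ip x₂ ≤ 0 := by
        intro x₁ x₂ h₁t h₁ h₂t h₂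
        set a : ℝ := r x₁ - lam with ha
        set b : ℝ := lam - r x₂ with hb
        have hapos : 0 < a := by simp [ha]; linarith
        have hbpos : 0 < b := by simp [hb]; linarith
        have habpos : 0 < a + b := by linarith
        set θ : ℝ := b / (a + b) with hθ
        have hθ0 : 0 ≤ θ := le_of_lt (div_pos hbpos habpos)
        have hθ1 : 0 ≤ 1 - θ := by
          rw [hθ]; rw [sub_nonneg, div_le_one habpos]; linarith
        have hsum : θ + (1 - θ) = 1 := by ring
        have hm₁ : (x₁, r x₁) ∈ {p : EuclideanSpace ℝ (Fin n) × ℝ | f p.1 ≤ (p.2 : EReal)} := by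
          simp only [mem_setOf_eq]; rw [hr x₁ h₁t]
        have hm₂ : (x₂, r x₂) ∈ {p : EuclideanSpace ℝ (Fin n) × ℝ | f p.1 ≤ (p.2 : EReal)} := by
          simp only [mem_setOf_eq]; rw [hr x₂ h₂t]
        have hmix := hconv hm₁ hm₂ hθ0 hθ1 hsum
        simp only [Prod.smul_mk, Prod.mk_add_mk, smul_eq_mul, mem_setOf_eq] at hmix
        have h2nd : θ * r x₁ + (1 - θ) * r x₂ = lam := by
          rw [hθ]
          have h1 : r x₁ = lam + a := by rw [ha]; ring
          have h2 : r x₂ = lam - b := by rw [hb]; ring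
          rw [h1, h2]
          field_simp
          ring
        rw [h2nd] at hmix
        have := hv _ hmix
        have hinner : (inner ℝ v (θ • x₁ + (1 - θ) • x₂ - xbar) : ℝ)
            = θ * ip x₁ + (1 - θ) * ip x₂ := by
          have hx : θ • x₁ + (1 - θ) • x₂ - xbar = θ • (x₁ - xbar) + (1 - θ) • (x₂ - xbar) := by
            module
          rw [hx, inner_add_right, real_inner_smul_right, real_inner_smul_right]
        rw [hinner] at this
        -- this : θ * ip x₁ + (1 - θ) * ip x₂ ≤ 0, multiply by (a+b)
        have h1θ : 1 - θ = a / (a + b) := by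
          rw [hθ]; field_simp; ring
        have hmul := mul_le_mul_of_nonneg_left this (le_of_lt habpos)
        rw [mul_add] at hmul
        have e1 : (a + b) * (θ * ip x₁) = b * ip x₁ := by
          rw [hθ]; field_simp
        have e2 : (a + b) * ((1 - θ) * ip x₂) = a * ip x₂ := by
          rw [h1θ]; field_simp
        rw [e1, e2, mul_zero] at hmul
        linarith
    -- end of key; now build the supremum
      have hx₀lam : lam < r x₀ := by
        by_contra h
        push_neg at h
        have : f x₀ ≤ (lam : EReal) := by
          rw [hr x₀ hx₀top]; exact EReal.coe_le_coe_iff.mpr h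
        exact absurd (hv x₀ this) (not_le.mpr hx₀pos)
      set T : Set ℝ := (fun x => ip x / (r x - lam)) '' {x | f x ≠ ⊤ ∧ lam < r x} with hT
      have hTne : T.Nonempty := ⟨ip x₀ / (r x₀ - lam), ⟨x₀, ⟨hx₀top, hx₀lam⟩, rfl⟩⟩
      have hub : ∀ x₂, f x₂ ≠ ⊤ → r x₂ < lam → ∀ t ∈ T, t ≤ (-ip x₂) / (lam - r x₂) := by
        rintro x₂ h₂t h₂ t ⟨x₁, ⟨h₁t, h₁⟩, rfl⟩
        rw [div_le_div_iff₀ (by linarith) (by linarith)]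
        have := key x₁ x₂ h₁t h₁ h₂t h₂
        nlinarith
      have hbdd : BddAbove T := ⟨(-ip xh) / (lam - r xh), fun t ht => hub xh hxhtop hxhlt t ht⟩
      set S : ℝ := sSup T with hS
      have hSpos : 0 < S := by
        have h1 : ip x₀ / (r x₀ - lam) ≤ S :=
          le_csSup hbdd ⟨x₀, ⟨hx₀top, hx₀lam⟩, rfl⟩
        have h2 : 0 < ip x₀ / (r x₀ - lam) := div_pos hx₀pos (by linarith)
        linarith
      have main : ∀ x, f x ≠ ⊤ → ip x ≤ S * (r x - lam) := by
        intro x hxt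
        rcases lt_trichotomy (r x) lam with h | h | h
        · have hSle : S ≤ (-ip x) / (lam - r x) := csSup_le hTne (hub x hxt h)
          have := mul_le_mul_of_nonneg_right hSle (le_of_lt (by linarith : (0:ℝ) < lam - r x))
          rw [div_mul_cancel₀ _ (by linarith : lam - r x ≠ 0)] at this
          nlinarith
        · have hfx : f x ≤ (lam : EReal) := by
            rw [hr x hxt]
            exact EReal.coe_le_coe_iff.mpr h.le
          have := hv x hfx
          rw [h]; simpa using this
        · have hmem : ip x / (r x - lam) ∈ T := ⟨x, ⟨hxt, h⟩, rfl⟩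
          have hle : ip x / (r x - lam) ≤ S := le_csSup hbdd hmem
          rw [div_le_iff₀ (by linarith : (0:ℝ) < r x - lam)] at hle
          linarith [hle]
      refine ⟨S, hSpos, ?_⟩
      rw [mem_smul_set]
      refine ⟨S⁻¹ • v, ?_, smul_inv_smul₀ (ne_of_gt hSpos) v⟩
      intro x
      by_cases hxt : f x = ⊤
      · rw [hxt, hxbar, EReal.top_sub_coe]
        exact le_top
      · rw [hr x hxt, hxbar, ← EReal.coe_sub, EReal.coe_le_coe_iff,
          real_inner_smul_left]
        have := main x hxt
        have h2 : S⁻¹ * (inner ℝ v (x - xbar) : ℝ) ≤ S⁻¹ * (S * (r x - lam)) :=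
          mul_le_mul_of_nonneg_left this (le_of_lt (inv_pos.mpr hSpos))
        rwa [inv_mul_cancel_left₀ (ne_of_gt hSpos)] at h2
  · -- easy direction
    rintro (⟨α, hα, hv⟩ | hv)
    · rw [mem_smul_set] at hv
      obtain ⟨w, hw, rfl⟩ := hv
      intro x hx
      have hxt : f x ≠ ⊤ := fun h => by rw [h] at hx; simp at hx
      have hwx := hw x
      rw [hr x hxt, hxbar, ← EReal.coe_sub, EReal.coe_le_coe_iff] at hwx
      have hxle : (f x).toReal ≤ lam := by
        rw [hr x hxt] at hx; exact EReal.coe_le_coe_iff.mp hx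
      rw [real_inner_smul_left]
      have : (inner ℝ w (x - xbar) : ℝ) ≤ 0 := by linarith
      exact mul_nonpos_of_nonneg_of_nonpos (le_of_lt hα) this
    · intro x hx
      have := hv (x, lam) hx
      simpa using this
end
end
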